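/- arXiv:1907.12775 — 10 statements merged into one kernel-verified Lean document; each statement's English description precedes it below -/
import Mathlib

section
/- Let c ∈ ℝⁿ, b ∈ ℝᵐ, A ∈ ℝ^{m×n}. Let P be the LP max{cᵀx : Ax ≤ b, x ≥ 0} and let its complement P̄ be the LP min{cᵀx : (bcᵀ − A)x ≥ b, x ≥ 0}. If P attains an optimal value Opt(P) > 1, then P̄ has a feasible solution with objective value at most Opt(P)/(Opt(P)−1); in fact if x is optimal for P with value 1+a (a>0), then (1/a)x is feasible for P̄ with value 1+1/a. -/
open Matrix

theorem vecMulVec_sub_mulVec {ι κ R : Type*} [Fintype κ] [CommRing R]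
    (A : Matrix ι κ R) (b : ι → R) (c y : κ → R) :
    (vecMulVec b c - A) *ᵥ y = (c ⬝ᵥ y) • b - A *ᵥ y := by
  rw [sub_mulVec, vecMulVec_mulVec, op_smul_eq_smul]

theorem le_vecMulVec_sub_mulVec_inv_smul {ι κ 𝕜 : Type*} [Fintype κ] [Field 𝕜] [LinearOrder 𝕜]
    [IsStrictOrderedRing 𝕜] {A : Matrix ι κ 𝕜} {b : ι → 𝕜} {c y : κ → 𝕜} {a : 𝕜}
    (ha : 0 < a) (hy : A *ᵥ y ≤ b) (hval : c ⬝ᵥ y = 1 + a) :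
    b ≤ (vecMulVec b c - A) *ᵥ (a⁻¹ • y) := by
  rw [mulVec_smul, vecMulVec_sub_mulVec, hval]
  intro i
  simp only [Pi.smul_apply, Pi.sub_apply, smul_eq_mul]
  rw [le_inv_mul_iff₀ ha]
  linarith [hy i]

theorem stmt0_general {m n : ℕ} (A : Matrix (Fin m) (Fin n) ℝ) (b : Fin m → ℝ) (c : Fin n → ℝ)
    (x : Fin n → ℝ) (a : ℝ) (ha : 0 < a)
    (hxfeas : A.mulVec x ≤ b ∧ 0 ≤ x)
    (hxval : c ⬝ᵥ x = 1 + a) :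
    (0 ≤ a⁻¹ • x ∧ b ≤ (Matrix.of fun i j => b i * c j - A i j).mulVec (a⁻¹ • x)) ∧
      c ⬝ᵥ (a⁻¹ • x) = 1 + a⁻¹ ∧ c ⬝ᵥ (a⁻¹ • x) ≤ (1 + a) / ((1 + a) - 1) := by
  obtain ⟨hAx, hx⟩ := hxfeas
  have hval : c ⬝ᵥ (a⁻¹ • x) = 1 + a⁻¹ := by
    rw [dotProduct_smul, hxval, smul_eq_mul, mul_add, inv_mul_cancel₀ ha.ne', add_comm, mul_one]
  -- `of fun i j => b i * c j - A i j` is `vecMulVec b c - A` by definition.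
  refine ⟨⟨smul_nonneg (inv_nonneg.2 ha.le) hx, le_vecMulVec_sub_mulVec_inv_smul ha hAx hxval⟩,
    hval, ?_⟩
  rw [hval, add_sub_cancel_left, add_div, div_self ha.ne', one_div, add_comm]

/-- LP complementation: if `P = max {cᵀx : Ax ≤ b, x ≥ 0}` attains optimal value
`1 + a > 1` at `x`, then `(1/a) • x` is feasible for the complement LP
`min {cᵀx : (bcᵀ - A)x ≥ b, x ≥ 0}` with value `1 + 1/a ≤ Opt(P)/(Opt(P) - 1)`. -/
theorem stmt0 {m n : ℕ} (A : Matrix (Fin m) (Fin n) ℝ) (b : Fin m → ℝ) (c : Fin n → ℝ)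
    (x : Fin n → ℝ) (a : ℝ) (ha : 0 < a)
    (hxfeas : A.mulVec x ≤ b ∧ 0 ≤ x)
    (hopt : IsGreatest {v : ℝ | ∃ y : Fin n → ℝ, A.mulVec y ≤ b ∧ 0 ≤ y ∧ v = c ⬝ᵥ y} (1 + a))
    (hxval : c ⬝ᵥ x = 1 + a) :
    (0 ≤ a⁻¹ • x ∧ b ≤ (Matrix.of fun i j => b i * c j - A i j).mulVec (a⁻¹ • x)) ∧
      c ⬝ᵥ (a⁻¹ • x) = 1 + a⁻¹ ∧ c ⬝ᵥ (a⁻¹ • x) ≤ (1 + a) / ((1 + a) - 1) :=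
  stmt0_general A b c x a ha hxfeas hxval
end

section
/- Let P be the LP max{cᵀx : Ax ≤ b, x ≥ 0} and P̄ the LP min{cᵀx : (bcᵀ − A)x ≥ b, x ≥ 0}. Suppose P attains an optimal value greater than 1 and P̄ attains an optimal value. Then 1/Opt(P) + 1/Opt(P̄) = 1. -/
open Matrix

lemma key_mulVec {m n : ℕ} (A : Matrix (Fin m) (Fin n) ℝ) (b : Fin m → ℝ) (c : Fin n → ℝ)
    (x : Fin n → ℝ) (i : Fin m) :
    (Matrix.of fun i j => b i * c j - A i j).mulVec x i = b i * (c ⬝ᵥ x) - A.mulVec x i := by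
  simp only [Matrix.mulVec, dotProduct, Matrix.of_apply, sub_mul,
    Finset.sum_sub_distrib, Finset.mul_sum, mul_assoc]

lemma sum_comb {n : ℕ} (f x y : Fin n → ℝ) (l t : ℝ) :
    ∑ j, f j * ((x j + l * y j) / t) = ((∑ j, f j * x j) + l * ∑ j, f j * y j) / t := by
  rcases eq_or_ne t 0 with h | h
  · simp [h]
  · rw [eq_div_iff h, Finset.sum_mul, Finset.mul_sum, ← Finset.sum_add_distrib]
    apply Finset.sum_congr rfl
    intros
    field_simp

/-- LP complementation theorem: if `P = max {cᵀx : Ax ≤ b, x ≥ 0}` attains an optimal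
value `p > 1` and its complement `min {cᵀx : (bcᵀ - A)x ≥ b, x ≥ 0}` attains an optimal
value `q`, then `1/p + 1/q = 1`. -/
theorem stmt1 {m n : ℕ} (A : Matrix (Fin m) (Fin n) ℝ) (b : Fin m → ℝ) (c : Fin n → ℝ)
    (p q : ℝ)
    (hp : IsGreatest {v : ℝ | ∃ x : Fin n → ℝ, A.mulVec x ≤ b ∧ 0 ≤ x ∧ v = c ⬝ᵥ x} p)
    (hp1 : 1 < p)
    (hq : IsLeast {v : ℝ | ∃ x : Fin n → ℝ,
        b ≤ (Matrix.of fun i j => b i * c j - A i j).mulVec x ∧ 0 ≤ x ∧ v = c ⬝ᵥ x} q) :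
    1 / p + 1 / q = 1 := by
  have hp0 : (0:ℝ) < p - 1 := by linarith
  obtain ⟨x, hax, hx0, hvx⟩ := hp.1
  -- upper bound : q ≤ p / (p-1)
  have hcx : ∑ j, c j * x j = p := by
    rw [hvx]; rfl
  have hub : q ≤ p / (p - 1) := by
    apply hq.2
    refine ⟨fun j => x j / (p - 1), ?_, ?_, ?_⟩
    · intro i
      rw [key_mulVec]
      have h1 : c ⬝ᵥ (fun j => x j / (p - 1)) = p / (p - 1) := by
        simp only [dotProduct, mul_div_assoc', ← Finset.sum_div, hcx]
      have h2 : A.mulVec (fun j => x j / (p - 1)) i = A.mulVec x i / (p - 1) := by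
        simp only [Matrix.mulVec, dotProduct, mul_div_assoc', ← Finset.sum_div]
      rw [h1, h2]
      have h3 : b i * (p / (p - 1)) - A.mulVec x i / (p - 1)
          = (b i * p - A.mulVec x i) / (p - 1) := by ring
      rw [h3, le_div_iff₀ hp0]
      have := hax i
      nlinarith [hax i]
    · intro j
      exact div_nonneg (hx0 j) hp0.le
    · simp only [dotProduct, mul_div_assoc', ← Finset.sum_div, hcx]
  -- lower bound
  obtain ⟨y, hay, hy0, hvy⟩ := hq.1
  have hcy : ∑ j, c j * y j = q := by
    rw [hvy]; rfl
  have hAy : ∀ i, A.mulVec y i ≤ b i * (q - 1) := by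
    intro i
    have h := hay i
    rw [key_mulVec, ← hvy] at h
    nlinarith [h]
  obtain ⟨l, hl, ht⟩ : ∃ l : ℝ, 0 < l ∧ 0 < 1 + l * (q - 1) := by
    rcases le_or_gt 1 q with h | h
    · exact ⟨1, one_pos, by nlinarith⟩
    · have h2q : (0:ℝ) < 2 * (1 - q) := by linarith
      refine ⟨1 / (2 * (1 - q)), one_div_pos.mpr h2q, ?_⟩
      have hne : (1 : ℝ) - q ≠ 0 := by linarith
      have : 1 + 1 / (2 * (1 - q)) * (q - 1) = 1 / 2 := by
        field_simp
        ring
      rw [this]; norm_num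
  set t : ℝ := 1 + l * (q - 1) with htdef
  have hkey : (p + l * q) / t ≤ p := by
    apply hp.2
    refine ⟨fun j => (x j + l * y j) / t, ?_, ?_, ?_⟩
    · intro i
      have h2 : A.mulVec (fun j => (x j + l * y j) / t) i
          = (A.mulVec x i + l * A.mulVec y i) / t := by
        simp only [Matrix.mulVec, dotProduct]
        exact sum_comb (fun j => A i j) x y l t
      rw [h2, div_le_iff₀ ht]
      have h3 := mul_le_mul_of_nonneg_left (hAy i) hl.le
      have h4 := hax i
      have h5 : b i * t = b i + l * (b i * (q - 1)) := by rw [htdef]; ring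
      linarith
    · intro j
      exact div_nonneg (add_nonneg (hx0 j) (mul_nonneg hl.le (hy0 j))) ht.le
    · simp only [dotProduct]
      rw [sum_comb c x y l t, hcx, hcy]
  rw [div_le_iff₀ ht] at hkey
  have hlow : p ≤ q * (p - 1) := by
    have h5 : l * q ≤ l * (p * (q - 1)) := by
      rw [htdef] at hkey; nlinarith [hkey]
    have h6 : q ≤ p * (q - 1) := le_of_mul_le_mul_left h5 hl
    nlinarith
  have hqp : q * (p - 1) = p :=
    le_antisymm ((le_div_iff₀ hp0).mp hub) hlow
  have hqpos : 0 < q := by nlinarith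
  have hppos : 0 < p := by linarith
  field_simp
  linear_combination -hqp
end

section
/- Let A be an m×n real matrix with 0 ≤ A_{ij} ≤ 1 for all i,j, and let the value V of the matrix game with payoff matrix A satisfy 0 < V < 1. Then the optimal value of P = max{1ᵀx : Ax ≤ 1, x ≥ 0} equals 1/V, the optimal value of Q = min{1ᵀy : (1 − A)y ≥ 1, y ≥ 0} equals 1/(1−V), and hence 1/Opt(P) + 1/Opt(Q) = 1. -/
/-!
By von Neumann's minimax theorem the column player has a mixed strategy `c` with `A c ≤ V`,
and since the value `V` is attained, the row player has one, `r`, with `Aᵀ r ≥ V`.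
Then `c / V` is feasible for `P` and `c / (1 - V)` for `Q` (as `(1 - A) c = 1 - A c` when
`∑ c = 1`), and weighting the constraints of `P` and `Q` by `r` gives the matching bounds
`V ∑ x ≤ 1` and `(1 - V) ∑ y ≥ 1`.
-/

open Matrix

lemma Matrix.of_one_sub_mulVec {m n R : Type*} [Fintype n] [Ring R] (A : Matrix m n R)
    (y : n → R) :
    (of fun i j => 1 - A i j) *ᵥ y = (fun _ => ∑ j, y j) - A *ᵥ y := by
  ext i
  simp [mulVec, dotProduct, sub_mul, Finset.sum_sub_distrib]

section MatrixGame

variable {m n : Type*} [Fintype m] [Fintype n]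

theorem Matrix.exists_stdSimplex_mulVec_le_transpose_mulVec [Nonempty m] [Nonempty n]
    (A : Matrix m n ℝ) :
    ∃ c ∈ stdSimplex ℝ n, ∃ r ∈ stdSimplex ℝ m, ∀ i j, (A *ᵥ c) i ≤ (Aᵀ *ᵥ r) j := by
  classical
  have hX : (stdSimplex ℝ n).Nonempty := ⟨_, single_mem_stdSimplex ℝ (Classical.arbitrary n)⟩
  have hY : (stdSimplex ℝ m).Nonempty := ⟨_, single_mem_stdSimplex ℝ (Classical.arbitrary m)⟩
  obtain ⟨c, hc, r, hr, hsaddle⟩ := Sion.exists_isSaddlePointOn (f := fun c r => r ⬝ᵥ (A *ᵥ c))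
    hX (convex_stdSimplex ℝ n) (isCompact_stdSimplex ℝ n)
    (fun r _ => (by fun_prop : Continuous fun c => r ⬝ᵥ (A *ᵥ c)).lowerSemicontinuous
      |>.lowerSemicontinuousOn _)
    (fun r _ => (dotProductBilin ℝ ℝ r ∘ₗ A.mulVecLin).convexOn (convex_stdSimplex ℝ n)
      |>.quasiconvexOn)
    (convex_stdSimplex ℝ m) hY (isCompact_stdSimplex ℝ m)
    (fun c _ => (by fun_prop : Continuous fun r => r ⬝ᵥ (A *ᵥ c)).upperSemicontinuous
      |>.upperSemicontinuousOn _)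
    (fun c _ => ((dotProductBilin ℝ ℝ).flip (A *ᵥ c)).concaveOn (convex_stdSimplex ℝ m)
      |>.quasiconcaveOn)
  refine ⟨c, hc, r, hr, fun i j => ?_⟩
  have : Pi.single i 1 ⬝ᵥ (A *ᵥ c) ≤ r ⬝ᵥ (A *ᵥ Pi.single j 1) :=
    hsaddle _ (single_mem_stdSimplex ℝ j) _ (single_mem_stdSimplex ℝ i)
  rwa [single_dotProduct, one_mul, dotProduct_mulVec, dotProduct_single, mul_one,
    ← mulVec_transpose] at this

variable {A : Matrix m n ℝ} {V : ℝ} {r : m → ℝ} {c : n → ℝ}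

lemma mul_sum_le_one_of_mulVec_le_one (hr : r ∈ stdSimplex ℝ m) (hVr : (fun _ => V) ≤ Aᵀ *ᵥ r)
    {x : n → ℝ} (hAx : A *ᵥ x ≤ 1) (hx : 0 ≤ x) : V * ∑ j, x j ≤ 1 :=
  calc V * ∑ j, x j = (fun _ => V) ⬝ᵥ x := by simp [dotProduct, Finset.mul_sum]
    _ ≤ (Aᵀ *ᵥ r) ⬝ᵥ x := dotProduct_le_dotProduct_of_nonneg_right hVr hx
    _ = r ⬝ᵥ (A *ᵥ x) := by rw [mulVec_transpose, dotProduct_mulVec]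
    _ ≤ r ⬝ᵥ 1 := dotProduct_le_dotProduct_of_nonneg_left hAx hr.1
    _ = 1 := by rw [dotProduct_one, hr.2]

lemma one_le_mul_sum_of_one_le_mulVec (hr : r ∈ stdSimplex ℝ m) (hVr : (fun _ => V) ≤ Aᵀ *ᵥ r)
    {y : n → ℝ} (hBy : 1 ≤ (of fun i j => 1 - A i j) *ᵥ y) (hy : 0 ≤ y) :
    1 ≤ (1 - V) * ∑ j, y j :=
  calc 1 = r ⬝ᵥ 1 := by rw [dotProduct_one, hr.2]
    _ ≤ r ⬝ᵥ ((of fun i j => 1 - A i j) *ᵥ y) := dotProduct_le_dotProduct_of_nonneg_left hBy hr.1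
    _ = ∑ j, y j - (Aᵀ *ᵥ r) ⬝ᵥ y := by
      rw [of_one_sub_mulVec, dotProduct_sub, mulVec_transpose, ← dotProduct_mulVec]
      simp [dotProduct, ← Finset.sum_mul, hr.2]
    _ ≤ ∑ j, y j - (fun _ => V) ⬝ᵥ y := by
      gcongr
      exact dotProduct_le_dotProduct_of_nonneg_right hVr hy
    _ = (1 - V) * ∑ j, y j := by simp [dotProduct, sub_mul, Finset.mul_sum]

lemma exists_optimal_strategies_of_isGreatest [Nonempty m] [Nonempty n]
    (hval : IsGreatest {w | ∃ r : m → ℝ, 0 ≤ r ∧ ∑ i, r i = 1 ∧ w = ⨅ j, (Aᵀ *ᵥ r) j} V) :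
    (∃ r ∈ stdSimplex ℝ m, (fun _ => V) ≤ Aᵀ *ᵥ r) ∧
      ∃ c ∈ stdSimplex ℝ n, A *ᵥ c ≤ fun _ => V := by
  obtain ⟨⟨r, hr0, hr1, rfl⟩, hmax⟩ := hval
  obtain ⟨c, hc, r', hr', hcr'⟩ := A.exists_stdSimplex_mulVec_le_transpose_mulVec
  exact ⟨⟨r, ⟨hr0, hr1⟩, ciInf_le (Finite.bddBelow_range _)⟩,
    c, hc, fun i => (le_ciInf (hcr' i)).trans (hmax ⟨r', hr'.1, hr'.2, rfl⟩)⟩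

lemma isGreatest_sum_of_mulVec_le_one (hV : 0 < V) (hr : r ∈ stdSimplex ℝ m)
    (hVr : (fun _ => V) ≤ Aᵀ *ᵥ r) (hc : c ∈ stdSimplex ℝ n) (hAc : A *ᵥ c ≤ fun _ => V) :
    IsGreatest {v | ∃ x : n → ℝ, A *ᵥ x ≤ (fun _ => 1) ∧ 0 ≤ x ∧ v = ∑ j, x j} (1 / V) := by
  refine ⟨⟨V⁻¹ • c, fun i => ?_, smul_nonneg (inv_nonneg.2 hV.le) hc.1, ?_⟩, ?_⟩
  · simpa [mulVec_smul, inv_mul_le_iff₀ hV] using hAc i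
  · simp [← Finset.mul_sum, hc.2]
  · rintro _ ⟨x, hAx, hx, rfl⟩
    rw [le_div_iff₀ hV, mul_comm]
    exact mul_sum_le_one_of_mulVec_le_one hr hVr hAx hx

lemma isLeast_sum_of_one_le_mulVec (hV : V < 1) (hr : r ∈ stdSimplex ℝ m)
    (hVr : (fun _ => V) ≤ Aᵀ *ᵥ r) (hc : c ∈ stdSimplex ℝ n) (hAc : A *ᵥ c ≤ fun _ => V) :
    IsLeast {v | ∃ y : n → ℝ, (fun _ => 1) ≤ (of fun i j => 1 - A i j) *ᵥ y ∧ 0 ≤ y ∧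
      v = ∑ j, y j} (1 / (1 - V)) := by
  have hV' : 0 < 1 - V := sub_pos.2 hV
  refine ⟨⟨(1 - V)⁻¹ • c, fun i => ?_, smul_nonneg (inv_nonneg.2 hV'.le) hc.1, ?_⟩, ?_⟩
  · have := hAc i
    simp only [mulVec_smul, of_one_sub_mulVec, hc.2, Pi.smul_apply, Pi.sub_apply, smul_eq_mul,
      le_inv_mul_iff₀ hV']
    linarith
  · simp [← Finset.mul_sum, hc.2]
  · rintro _ ⟨y, hBy, hy, rfl⟩
    rw [div_le_iff₀ hV', mul_comm]
    exact one_le_mul_sum_of_one_le_mulVec hr hVr hBy hy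

end MatrixGame

theorem stmt4_general {m n : ℕ} (hm : 0 < m) (hn : 0 < n) (A : Matrix (Fin m) (Fin n) ℝ)
    (V : ℝ) (hV0 : 0 < V) (hV1 : V < 1)
    (hval : IsGreatest {w : ℝ | ∃ r : Fin m → ℝ, 0 ≤ r ∧ ∑ i, r i = 1 ∧
        w = ⨅ j : Fin n, Aᵀ.mulVec r j} V) :
    IsGreatest {v : ℝ | ∃ x : Fin n → ℝ,
        A.mulVec x ≤ (fun _ => 1) ∧ 0 ≤ x ∧ v = ∑ j, x j} (1 / V) ∧
    IsLeast {v : ℝ | ∃ y : Fin n → ℝ,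
        ((fun _ => 1) : Fin m → ℝ) ≤ (Matrix.of fun i j => 1 - A i j).mulVec y ∧
          0 ≤ y ∧ v = ∑ j, y j} (1 / (1 - V)) ∧
    1 / (1 / V) + 1 / (1 / (1 - V)) = 1 := by
  have : NeZero m := ⟨hm.ne'⟩
  have : NeZero n := ⟨hn.ne'⟩
  obtain ⟨⟨r, hr, hVr⟩, c, hc, hAc⟩ := exists_optimal_strategies_of_isGreatest hval
  exact ⟨isGreatest_sum_of_mulVec_le_one hV0 hr hVr hc hAc,
    isLeast_sum_of_one_le_mulVec hV1 hr hVr hc hAc, by simp⟩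

/-- Game-theoretic interpretation of LP complementation: if the matrix game with payoff
matrix `A` (entries in `[0,1]`) has value `V` with `0 < V < 1`, then
`P = max {1ᵀx : Ax ≤ 1, x ≥ 0}` has optimal value `1/V`,
`Q = min {1ᵀy : (1 - A)y ≥ 1, y ≥ 0}` has optimal value `1/(1 - V)`, and
`1/Opt(P) + 1/Opt(Q) = 1`. -/
theorem stmt4 {m n : ℕ} (hm : 0 < m) (hn : 0 < n) (A : Matrix (Fin m) (Fin n) ℝ)
    (hA : ∀ i j, 0 ≤ A i j ∧ A i j ≤ 1) (V : ℝ) (hV0 : 0 < V) (hV1 : V < 1)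
    (hval : IsGreatest {w : ℝ | ∃ r : Fin m → ℝ, 0 ≤ r ∧ ∑ i, r i = 1 ∧
        w = ⨅ j : Fin n, Aᵀ.mulVec r j} V) :
    IsGreatest {v : ℝ | ∃ x : Fin n → ℝ,
        A.mulVec x ≤ (fun _ => 1) ∧ 0 ≤ x ∧ v = ∑ j, x j} (1 / V) ∧
    IsLeast {v : ℝ | ∃ y : Fin n → ℝ,
        ((fun _ => 1) : Fin m → ℝ) ≤ (Matrix.of fun i j => 1 - A i j).mulVec y ∧
          0 ≤ y ∧ v = ∑ j, y j} (1 / (1 - V)) ∧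
    1 / (1 / V) + 1 / (1 / (1 - V)) = 1 :=
  stmt4_general hm hn A V hV0 hV1 hval
end

section
/- For any finite hypergraph H = (V,E) with no isolated vertices and no empty edges: p(H) ≤ α(H) ≤ p_f(H) = k_f(H) ≤ β(H) ≤ k(H), where α(H) = max over nonempty S ⊆ V with ρ_H(S) > 0 of |S|/ρ_H(S) and β(H) = min over Z ⊆ E with ρ̃_H(Z) > 0 of |Z|/ρ̃_H(Z). -/
theorem farkasAux : ∀ (n : ℕ) (ι : Type) [Fintype ι] (a : ι → Fin n → ℝ) (b : ι → ℝ),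
    (∃ x : Fin n → ℝ, ∀ i, ∑ j, a i j * x j ≤ b i) ∨
    (∃ u : ι → ℝ, (∀ i, 0 ≤ u i) ∧ (∀ j, ∑ i, u i * a i j = 0) ∧ ∑ i, u i * b i < 0) := by
  intro n
  induction n with
  | zero =>
    intro ι _ a b
    classical
    by_cases hb : ∀ i, 0 ≤ b i
    · exact Or.inl ⟨fun _ => 0, fun i => by simpa using hb i⟩
    · push_neg at hb
      obtain ⟨i₀, hi₀⟩ := hb
      refine Or.inr ⟨fun i => if i = i₀ then 1 else 0, fun i => by dsimp only; split_ifs <;> norm_num, fun j => j.elim0, ?_⟩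
      simp only [ite_mul, one_mul, zero_mul]
      rw [Finset.sum_ite_eq' Finset.univ i₀ b]
      simpa using hi₀
  | succ n IH =>
    intro ι _ a b
    classical
    set c : ι → ℝ := fun i => a i (Fin.last n) with hc
    set a' : ι → Fin n → ℝ := fun i j => a i (Fin.castSucc j) with ha'
    rcases IH (ι ⊕ ι × ι)
        (Sum.elim (fun i j => if c i = 0 then a' i j else 0)
          (fun pq j => if 0 < c pq.1 ∧ c pq.2 < 0
            then (-c pq.2) * a' pq.1 j + c pq.1 * a' pq.2 j else 0))
        (Sum.elim (fun i => if c i = 0 then b i else 0)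
          (fun pq => if 0 < c pq.1 ∧ c pq.2 < 0
            then (-c pq.2) * b pq.1 + c pq.1 * b pq.2 else 0))
      with ⟨x', hx'⟩ | ⟨u', hu0, hucol, hub⟩
    · -- feasible case: choose the last variable t
      set S : ι → ℝ := fun i => ∑ j, a' i j * x' j with hS
      set L : ι → ℝ := fun i => b i - S i with hL
      have hZ : ∀ i, c i = 0 → 0 ≤ L i := by
        intro i hi
        have h := hx' (Sum.inl i)
        simp only [Sum.elim_inl, hi, eq_self_iff_true, if_true] at h
        simp only [hL, hS, sub_nonneg]
        exact h
      have hPN : ∀ p q, 0 < c p → c q < 0 → 0 ≤ (-c q) * L p + c p * L q := by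
        intro p q hp hq
        have h := hx' (Sum.inr (p, q))
        simp only [Sum.elim_inr, if_pos (And.intro hp hq)] at h
        have hsum : ∑ j, ((-c q) * a' p j + c p * a' q j) * x' j
            = (-c q) * S p + c p * S q := by
          simp only [hS, Finset.mul_sum]
          rw [← Finset.sum_add_distrib]
          exact Finset.sum_congr rfl fun j _ => by ring
        rw [hsum] at h
        simp only [hL]
        linarith
      have hquot : ∀ p q, 0 < c p → c q < 0 → L q / c q ≤ L p / c p := by
        intro p q hp hq
        have h := hPN p q hp hq
        rw [show L q / c q = -L q / -c q by rw [neg_div_neg_eq],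
          div_le_div_iff₀ (by linarith) hp]
        nlinarith
      have build : ∀ t : ℝ, (∀ i, c i * t ≤ L i) →
          ∃ x : Fin (n+1) → ℝ, ∀ i, ∑ j, a i j * x j ≤ b i := by
        intro t ht
        refine ⟨Fin.snoc x' t, fun i => ?_⟩
        rw [Fin.sum_univ_castSucc]
        simp only [Fin.snoc_castSucc, Fin.snoc_last]
        have h1 := ht i
        have h2 : ∑ j : Fin n, a i (Fin.castSucc j) * x' j = S i := rfl
        simp only [hL] at h1
        rw [h2]
        linarith
      left
      by_cases hP : (Finset.univ.filter fun i => 0 < c i).Nonempty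
      · apply build ((Finset.univ.filter fun i => 0 < c i).inf' hP fun p => L p / c p)
        intro i
        rcases lt_trichotomy (c i) 0 with hi | hi | hi
        · have h1 : L i / c i ≤ (Finset.univ.filter fun i => 0 < c i).inf' hP fun p => L p / c p :=
            Finset.le_inf' hP _ fun p hp => hquot p i (by simpa using hp) hi
          calc c i * ((Finset.univ.filter fun i => 0 < c i).inf' hP fun p => L p / c p)
              ≤ c i * (L i / c i) := mul_le_mul_of_nonpos_left h1 hi.le
            _ = L i := by rw [mul_comm, div_mul_cancel₀ _ hi.ne]
        · rw [hi, zero_mul]; exact hZ i hi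
        · have h1 : ((Finset.univ.filter fun i => 0 < c i).inf' hP fun p => L p / c p)
              ≤ L i / c i := Finset.inf'_le _ (by simpa using hi)
          calc c i * ((Finset.univ.filter fun i => 0 < c i).inf' hP fun p => L p / c p)
              ≤ c i * (L i / c i) := mul_le_mul_of_nonneg_left h1 hi.le
            _ = L i := by rw [mul_comm, div_mul_cancel₀ _ hi.ne']
      · by_cases hN : (Finset.univ.filter fun i => c i < 0).Nonempty
        · apply build ((Finset.univ.filter fun i => c i < 0).sup' hN fun q => L q / c q)
          intro i
          rcases lt_trichotomy (c i) 0 with hi | hi | hi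
          · have h1 : L i / c i ≤ (Finset.univ.filter fun i => c i < 0).sup' hN fun q => L q / c q :=
              Finset.le_sup' (f := fun q => L q / c q) (by simp [hi])
            calc c i * ((Finset.univ.filter fun i => c i < 0).sup' hN fun q => L q / c q)
                ≤ c i * (L i / c i) := mul_le_mul_of_nonpos_left h1 hi.le
              _ = L i := by rw [mul_comm, div_mul_cancel₀ _ hi.ne]
          · rw [hi, zero_mul]; exact hZ i hi
          · exact absurd ⟨i, by simpa using hi⟩ hP
        · apply build 0
          intro i
          rcases lt_trichotomy (c i) 0 with hi | hi | hi
          · exact absurd ⟨i, by simpa using hi⟩ hN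
          · rw [hi, zero_mul]; exact hZ i hi
          · exact absurd ⟨i, by simpa using hi⟩ hP
    · -- infeasible case: build the certificate for the original system
      right
      set u : ι → ℝ := fun i =>
        if c i = 0 then u' (Sum.inl i)
        else if 0 < c i then ∑ q, (if c q < 0 then (-c q) * u' (Sum.inr (i, q)) else 0)
        else ∑ p, (if 0 < c p then c p * u' (Sum.inr (p, i)) else 0) with hu
      have key : ∀ f : ι → ℝ, ∑ i, u i * f i
          = (∑ i, u' (Sum.inl i) * (if c i = 0 then f i else 0))
          + ∑ pq : ι × ι, u' (Sum.inr pq) *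
              (if 0 < c pq.1 ∧ c pq.2 < 0
                then (-c pq.2) * f pq.1 + c pq.1 * f pq.2 else 0) := by
        intro f
        have expand : ∀ i, u i * f i = (if c i = 0 then u' (Sum.inl i) * f i else 0)
            + ((∑ q, if 0 < c i ∧ c q < 0 then (-c q) * u' (Sum.inr (i, q)) * f i else 0)
            + (∑ p, if 0 < c p ∧ c i < 0 then c p * u' (Sum.inr (p, i)) * f i else 0)) := by
          intro i
          rcases lt_trichotomy (c i) 0 with hi | hi | hi
          · have e1 : (c i = 0) = False := by simp [hi.ne]
            have e2 : (0 < c i) = False := by simp [lt_asymm hi]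
            have e3 : (c i < 0) = True := by simp [hi]
            simp only [hu, e1, e2, e3, if_false, and_false, and_true, false_and,
              if_true, Finset.sum_const_zero, zero_add, Finset.sum_mul, ite_mul, zero_mul]
          · have e1 : (c i = 0) = True := by simp [hi]
            have e2 : (0 < c i) = False := by simp [hi]
            have e3 : (c i < 0) = False := by simp [hi]
            simp only [hu, e1, e2, e3, if_true, if_false, and_false, false_and,
              Finset.sum_const_zero, add_zero, zero_add]
          · have e1 : (c i = 0) = False := by simp [hi.ne']
            have e2 : (0 < c i) = True := by simp [hi]
            have e3 : (c i < 0) = False := by simp [lt_asymm hi]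
            simp only [hu, e1, e2, e3, if_false, if_true, true_and, and_false,
              Finset.sum_const_zero, add_zero, zero_add, Finset.sum_mul, ite_mul, zero_mul]
        rw [Finset.sum_congr rfl fun i _ => expand i]
        rw [Finset.sum_add_distrib, Finset.sum_add_distrib]
        congr 1
        · exact Finset.sum_congr rfl fun i _ => by rw [mul_ite, mul_zero]
        · rw [Fintype.sum_prod_type]
          have rhs : ∀ p q : ι, u' (Sum.inr (p, q)) *
              (if 0 < c p ∧ c q < 0 then (-c q) * f p + c p * f q else 0)
              = (if 0 < c p ∧ c q < 0 then (-c q) * u' (Sum.inr (p, q)) * f p else 0)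
              + (if 0 < c p ∧ c q < 0 then c p * u' (Sum.inr (p, q)) * f q else 0) := by
            intro p q
            split_ifs <;> ring
          rw [Finset.sum_congr rfl fun p _ => Finset.sum_congr rfl fun q _ => rhs p q]
          rw [Finset.sum_congr rfl fun p (_ : p ∈ Finset.univ) => Finset.sum_add_distrib,
            Finset.sum_add_distrib]
          congr 1
          exact Finset.sum_comm
      refine ⟨u, ?_, ?_, ?_⟩
      · intro i
        simp only [hu]
        split_ifs
        · exact hu0 (Sum.inl i)
        · refine Finset.sum_nonneg fun q _ => ?_
          split_ifs with hq
          · exact mul_nonneg (by linarith) (hu0 _)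
          · exact le_refl 0
        · refine Finset.sum_nonneg fun p _ => ?_
          split_ifs with hp
          · exact mul_nonneg (by linarith) (hu0 _)
          · exact le_refl 0
      · intro j
        rcases Fin.eq_castSucc_or_eq_last j with ⟨j', rfl⟩ | rfl
        · have h := hucol j'
          rw [Fintype.sum_sum_type] at h
          simp only [Sum.elim_inl, Sum.elim_inr, ha'] at h
          rw [key (fun i => a i (Fin.castSucc j'))]
          exact h
        · rw [key (fun i => a i (Fin.last n))]
          have h1 : ∀ i : ι, (u' (Sum.inl i) * if c i = 0 then a i (Fin.last n) else 0) = 0 := by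
            intro i
            split_ifs with h
            · rw [show a i (Fin.last n) = c i from rfl, h, mul_zero]
            · rw [mul_zero]
          have h2 : ∀ pq : ι × ι, u' (Sum.inr pq) * (if 0 < c pq.1 ∧ c pq.2 < 0
              then -c pq.2 * a pq.1 (Fin.last n) + c pq.1 * a pq.2 (Fin.last n) else 0) = 0 := by
            intro pq
            split_ifs with h
            · rw [show a pq.1 (Fin.last n) = c pq.1 from rfl,
                show a pq.2 (Fin.last n) = c pq.2 from rfl]
              ring
            · rw [mul_zero]
          rw [Finset.sum_congr rfl fun i _ => h1 i, Finset.sum_congr rfl fun pq _ => h2 pq]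
          simp
      · have h := hub
        rw [Fintype.sum_sum_type] at h
        simp only [Sum.elim_inl, Sum.elim_inr] at h
        rw [key b]
        exact h

lemma indSum {α : Type*} [Fintype α] [DecidableEq α] (P : α → Bool) (S : Finset α) (z : ℝ) :
    ∑ v : α, (if P v then (1:ℝ) else 0) * (if v ∈ S then z else 0)
      = ((S.filter fun v => P v).card : ℝ) * z := by
  classical
  rw [Finset.sum_congr rfl (fun v _ =>
    show _ = if v ∈ S.filter (fun v => P v) then z else 0 from by
      by_cases h1 : P v <;> by_cases h2 : v ∈ S <;> simp [h1, h2])]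
  rw [Finset.sum_ite_mem, Finset.univ_inter, Finset.sum_const, nsmul_eq_mul]

lemma indSum2 {α : Type*} [Fintype α] [DecidableEq α] (S : Finset α) (z : ℝ) :
    ∑ v : α, (if v ∈ S then z else 0) = (S.card : ℝ) * z := by
  classical
  rw [Finset.sum_ite_mem, Finset.univ_inter, Finset.sum_const, nsmul_eq_mul]

/-- For a finite hypergraph `H` without isolated vertices and without empty edges:
`p(H) ≤ α(H) ≤ p_f(H) = k_f(H) ≤ β(H) ≤ k(H)`, where `p` is the packing number,
`k` the covering number, `p_f`/`k_f` their fractional relaxations,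
`α(H) = max {|S|/ρ_H(S) : S ⊆ V, ρ_H(S) > 0}` and
`β(H) = min {|Z|/ρ̃_H(Z) : Z ⊆ E, ρ̃_H(Z) > 0}`. -/
theorem stmt11 {n m : ℕ} (hn : 0 < n) (hm : 0 < m) (mem : Fin n → Fin m → Bool)
    (hNoIsolated : ∀ v : Fin n, ∃ e : Fin m, mem v e)
    (hNoEmptyEdge : ∀ e : Fin m, ∃ v : Fin n, mem v e)
    (p k : ℕ) (a b pf kf : ℝ)
    -- packing number
    (hp : IsGreatest {t : ℕ | ∃ S : Finset (Fin n),
        (∀ e : Fin m, (S.filter (fun v => mem v e)).card ≤ 1) ∧ S.card = t} p)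
    -- covering number
    (hk : IsLeast {t : ℕ | ∃ Z : Finset (Fin m),
        (∀ v : Fin n, ∃ e ∈ Z, mem v e) ∧ Z.card = t} k)
    -- α(H)
    (ha : IsGreatest {q : ℝ | ∃ S : Finset (Fin n),
        0 < Finset.univ.sup (fun e : Fin m => (S.filter (fun v => mem v e)).card) ∧
        q = (S.card : ℝ) /
          ((Finset.univ.sup (fun e : Fin m => (S.filter (fun v => mem v e)).card) : ℕ) : ℝ)} a)
    -- β(H)
    (hb : IsLeast {q : ℝ | ∃ Z : Finset (Fin m),
        0 < Finset.univ.inf' ⟨⟨0, hn⟩, Finset.mem_univ _⟩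
          (fun v : Fin n => (Z.filter (fun e => mem v e)).card) ∧
        q = (Z.card : ℝ) /
          ((Finset.univ.inf' ⟨⟨0, hn⟩, Finset.mem_univ _⟩
            (fun v : Fin n => (Z.filter (fun e => mem v e)).card) : ℕ) : ℝ)} b)
    -- fractional packing number p_f(H)
    (hpf : IsGreatest {s : ℝ | ∃ y : Fin n → ℝ, 0 ≤ y ∧
        (∀ e : Fin m, ∑ v : Fin n, (if mem v e then (1:ℝ) else 0) * y v ≤ 1) ∧
        s = ∑ v : Fin n, y v} pf)
    -- fractional covering number k_f(H)
    (hkf : IsLeast {s : ℝ | ∃ x : Fin m → ℝ, 0 ≤ x ∧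
        (∀ v : Fin n, 1 ≤ ∑ e : Fin m, (if mem v e then (1:ℝ) else 0) * x e) ∧
        s = ∑ e : Fin m, x e} kf) :
    (p : ℝ) ≤ a ∧ a ≤ pf ∧ pf = kf ∧ kf ≤ b ∧ b ≤ (k : ℝ) := by
  classical
  -- Part 1 : p ≤ a
  have hpa : (p:ℝ) ≤ a := by
    obtain ⟨S, hSpack, hScard⟩ := hp.1
    rcases S.eq_empty_or_nonempty with hS | ⟨v, hv⟩
    · obtain ⟨S', hsup', haeq⟩ := ha.1
      have h0a : (0:ℝ) ≤ a := by rw [haeq]; positivity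
      have hp0 : p = 0 := by rw [← hScard, hS, Finset.card_empty]
      rw [hp0]; exact_mod_cast h0a
    · obtain ⟨e, he⟩ := hNoIsolated v
      have hsup1 : Finset.univ.sup (fun e : Fin m => (S.filter fun v => mem v e).card) = 1 := by
        apply le_antisymm
        · exact Finset.sup_le fun e _ => hSpack e
        · calc 1 ≤ (S.filter fun w => mem w e).card :=
              Finset.card_pos.mpr ⟨v, Finset.mem_filter.mpr ⟨hv, he⟩⟩
            _ ≤ _ := Finset.le_sup (f := fun e : Fin m => (S.filter fun v => mem v e).card)
              (Finset.mem_univ e)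
      exact ha.2 ⟨S, by rw [hsup1]; exact one_pos, by rw [hsup1, hScard]; norm_num⟩
  -- Part 2 : a ≤ pf
  have hapf : a ≤ pf := by
    obtain ⟨S, hsup, haeq⟩ := ha.1
    set r : ℕ := Finset.univ.sup (fun e : Fin m => (S.filter fun v => mem v e).card) with hr
    have hr0 : (0:ℝ) < r := by exact_mod_cast hsup
    apply hpf.2
    refine ⟨fun v => if v ∈ S then 1/(r:ℝ) else 0, ?_, ?_, ?_⟩
    · refine Pi.le_def.mpr fun v => ?_
      simp only [Pi.zero_apply]
      split_ifs
      · positivity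
      · exact le_refl 0
    · intro e
      rw [indSum]
      have hle : ((S.filter fun v => mem v e).card : ℝ) ≤ r := by
        exact_mod_cast Finset.le_sup (f := fun e : Fin m => (S.filter fun v => mem v e).card)
          (Finset.mem_univ e)
      rw [mul_one_div]
      exact div_le_one_of_le₀ hle (le_of_lt hr0)
    · rw [indSum2, haeq, mul_one_div]
  -- weak duality : pf ≤ kf
  have hwk : pf ≤ kf := by
    obtain ⟨y, hy0, hyc, hys⟩ := hpf.1
    obtain ⟨x, hx0, hxc, hxs⟩ := hkf.1
    rw [hys, hxs]
    calc ∑ v, y v ≤ ∑ v, y v * ∑ e, (if mem v e then (1:ℝ) else 0) * x e := by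
          refine Finset.sum_le_sum fun v _ => ?_
          exact le_mul_of_one_le_right (Pi.le_def.mp hy0 v) (hxc v)
      _ = ∑ e, x e * ∑ v, (if mem v e then (1:ℝ) else 0) * y v := by
          simp only [Finset.mul_sum]
          rw [Finset.sum_comm]
          exact Finset.sum_congr rfl fun e _ => Finset.sum_congr rfl fun v _ => by ring
      _ ≤ ∑ e, x e * 1 := Finset.sum_le_sum fun e _ =>
          mul_le_mul_of_nonneg_left (hyc e) (Pi.le_def.mp hx0 e)
      _ = ∑ e, x e := by simp
  -- strong duality : kf ≤ pf  (via Farkas)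
  have hstrong : kf ≤ pf := by
    rcases farkasAux n (Fin m ⊕ (Fin n ⊕ Unit))
        (Sum.elim (fun e v => if mem v e then (1:ℝ) else 0)
          (Sum.elim (fun w v => if v = w then (-1:ℝ) else 0) (fun _ _ => (-1:ℝ))))
        (Sum.elim (fun _ => (1:ℝ)) (Sum.elim (fun _ => (0:ℝ)) (fun _ => -kf)))
      with ⟨y, hy⟩ | ⟨u, hu0, hcol, hbb⟩
    · have hy0 : ∀ v, 0 ≤ y v := by
        intro v
        have h := hy (Sum.inr (Sum.inl v))
        simp only [Sum.elim_inr, Sum.elim_inl] at h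
        rw [Finset.sum_congr rfl (fun w _ =>
          show (if w = v then (-1:ℝ) else 0) * y w = if w = v then -y w else 0 from by
            split_ifs <;> ring), Finset.sum_ite_eq' Finset.univ v] at h
        simpa using h
      have hcons : ∀ e, ∑ v, (if mem v e then (1:ℝ) else 0) * y v ≤ 1 := by
        intro e
        have h := hy (Sum.inl e)
        simpa using h
      have hsumy : kf ≤ ∑ v, y v := by
        have h := hy (Sum.inr (Sum.inr ()))
        simp only [Sum.elim_inr, neg_one_mul] at h
        rw [Finset.sum_neg_distrib] at h
        linarith
      exact le_trans hsumy (hpf.2 ⟨y, Pi.le_def.mpr hy0, hcons, rfl⟩)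
    · exfalso
      set t := u (Sum.inr (Sum.inr ())) with htdef
      have hcol' : ∀ v, ∑ e, u (Sum.inl e) * (if mem v e then (1:ℝ) else 0)
          = u (Sum.inr (Sum.inl v)) + t := by
        intro v
        have h := hcol v
        rw [Fintype.sum_sum_type, Fintype.sum_sum_type] at h
        simp only [Sum.elim_inl, Sum.elim_inr, mul_ite, mul_neg_one, mul_zero] at h
        rw [Finset.sum_ite_eq Finset.univ v (fun w => -u (Sum.inr (Sum.inl w)))] at h
        simp only [Finset.mem_univ, if_true] at h
        have hunit : ∑ x : Unit, -u (Sum.inr (Sum.inr x)) = -t := by simp [htdef]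
        rw [hunit] at h
        simp only [mul_ite, mul_one, mul_zero] at h ⊢
        linarith
      have hbb' : ∑ e, u (Sum.inl e) < t * kf := by
        have h := hbb
        rw [Fintype.sum_sum_type, Fintype.sum_sum_type] at h
        simp only [Sum.elim_inl, Sum.elim_inr, mul_one, mul_zero, Finset.sum_const_zero,
          mul_neg, zero_add] at h
        have hunit : ∑ x : Unit, -(u (Sum.inr (Sum.inr x)) * kf) = -(t * kf) := by simp [htdef]
        rw [hunit] at h
        linarith
      have ht0 : 0 < t := by
        rcases (hu0 (Sum.inr (Sum.inr ()))).lt_or_eq with h | h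
        · exact h
        · exfalso
          have hs : 0 ≤ ∑ e, u (Sum.inl e) := Finset.sum_nonneg fun e _ => hu0 (Sum.inl e)
          rw [show t = (0:ℝ) from htdef.trans h.symm, zero_mul] at hbb'
          linarith
      have hmem : kf ≤ ∑ e, u (Sum.inl e) / t := by
        apply hkf.2
        refine ⟨fun e => u (Sum.inl e) / t, ?_, ?_, rfl⟩
        · exact Pi.le_def.mpr fun e => div_nonneg (hu0 (Sum.inl e)) ht0.le
        · intro v
          have hsum : ∑ e, (if mem v e then (1:ℝ) else 0) * (u (Sum.inl e) / t)
              = (u (Sum.inr (Sum.inl v)) + t) / t := by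
            rw [← hcol' v, Finset.sum_div]
            exact Finset.sum_congr rfl fun e _ => by ring
          rw [hsum, le_div_iff₀ ht0, one_mul]
          linarith [hu0 (Sum.inr (Sum.inl v))]
      rw [← Finset.sum_div, le_div_iff₀ ht0] at hmem
      nlinarith [hbb', hmem]
  -- Part 4 : kf ≤ b
  have hkfb : kf ≤ b := by
    obtain ⟨Z, hinf, hbeq⟩ := hb.1
    set r : ℕ := Finset.univ.inf' ⟨⟨0, hn⟩, Finset.mem_univ _⟩
      (fun v : Fin n => (Z.filter (fun e => mem v e)).card) with hr
    have hr0 : (0:ℝ) < r := by exact_mod_cast hinf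
    apply hkf.2
    refine ⟨fun e => if e ∈ Z then 1/(r:ℝ) else 0, ?_, ?_, ?_⟩
    · refine Pi.le_def.mpr fun e => ?_
      simp only [Pi.zero_apply]
      split_ifs
      · positivity
      · exact le_refl 0
    · intro v
      rw [indSum (fun e => mem v e) Z (1/(r:ℝ))]
      have hge : (r:ℝ) ≤ ((Z.filter fun e => mem v e).card : ℝ) := by
        exact_mod_cast Finset.inf'_le (fun v : Fin n => (Z.filter (fun e => mem v e)).card)
          (Finset.mem_univ v)
      rw [mul_one_div]
      exact (one_le_div hr0).mpr hge
    · rw [indSum2, hbeq, mul_one_div]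
  -- Part 5 : b ≤ k
  have hbk : b ≤ (k:ℝ) := by
    obtain ⟨Z, hcov, hZcard⟩ := hk.1
    have hge1 : ∀ v : Fin n, 1 ≤ (Z.filter fun e => mem v e).card := by
      intro v
      obtain ⟨e, heZ, hme⟩ := hcov v
      exact Finset.card_pos.mpr ⟨e, Finset.mem_filter.mpr ⟨heZ, hme⟩⟩
    have hinf1 : 1 ≤ Finset.univ.inf' ⟨⟨0, hn⟩, Finset.mem_univ _⟩
        (fun v : Fin n => (Z.filter (fun e => mem v e)).card) :=
      Finset.le_inf' _ _ fun v _ => hge1 v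
    have hble := hb.2 ⟨Z, lt_of_lt_of_le zero_lt_one hinf1, rfl⟩
    calc b ≤ (Z.card : ℝ) / ((Finset.univ.inf' ⟨⟨0, hn⟩, Finset.mem_univ _⟩
          (fun v : Fin n => (Z.filter (fun e => mem v e)).card) : ℕ) : ℝ) := hble
      _ ≤ (Z.card : ℝ) := div_le_self (by positivity) (by exact_mod_cast hinf1)
      _ = (k : ℝ) := by rw [hZcard]
  exact ⟨hpa, hapf, le_antisymm hwk hstrong, hkfb, hbk⟩
end

section
/- Let H be a finite nontrivial hypergraph (no empty edges, no universal vertices). Then 1/α(H̄) + 1/β(H*) = 1, where H̄ is the complement and H* the dual of H. -/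
/-!
For every set `S` of vertices, the edge missing the most of `S` is the edge containing the least
of it, so `max_e |S ∖ e| + min_e |S ∩ e| = |S|`: the reciprocals of the ratios optimised by
`α(H̄)` and `β(H*)` at the same `S` sum to `1`. An optimal set for either problem is admissible
for the other one, which gives `1/α(H̄) + 1/β(H*) ≥ 1` and `≤ 1`. Admissibility is where
nontriviality enters: a set with `min_e |Z ∩ e| > 0` is nonempty, so without universal vertices
`max_e |Z ∖ e| > 0`; and since no edge is empty, `α(H̄) > 1`, which rules out
`min_e |S ∩ e| = 0` at an optimal `S`.
-/

open Finset

namespace Incidence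

variable {α ι : Type*} [Fintype ι] (mem : α → ι → Bool)

/-- `ρ_{H̄}(S)`, for the hypergraph `H` whose incidence relation is `mem`. -/
def maxOutside (S : Finset α) : ℕ :=
  univ.sup fun e => #{v ∈ S | ¬ mem v e}

/-- `ρ̃_{H*}(S)`, for the hypergraph `H` whose incidence relation is `mem`. -/
def minInside (hι : (univ : Finset ι).Nonempty) (S : Finset α) : ℕ :=
  univ.inf' hι fun e => #{v ∈ S | mem v e}

theorem maxOutside_add_minInside (hι : (univ : Finset ι).Nonempty) (S : Finset α) :
    maxOutside mem S + minInside mem hι S = #S := by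
  obtain ⟨e₀, -, he₀⟩ := exists_mem_eq_inf' hι fun e => #{v ∈ S | mem v e}
  have split (e : ι) : #{v ∈ S | mem v e} + #{v ∈ S | ¬ mem v e} = #S :=
    card_filter_add_card_filter_not _
  have hsup : maxOutside mem S = #{v ∈ S | ¬ mem v e₀} := by
    refine le_antisymm (Finset.sup_le fun e _ => ?_)
      (le_sup (f := fun e => #{v ∈ S | ¬ mem v e}) (mem_univ e₀))
    have := inf'_le (fun e => #{v ∈ S | mem v e}) (mem_univ e)
    have := split e
    have := split e₀
    omega
  rw [minInside, hsup, he₀]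
  have := split e₀
  omega

theorem maxOutside_div_card_add_minInside_div_card (hι : (univ : Finset ι).Nonempty)
    {S : Finset α} (hS : S.Nonempty) :
    (maxOutside mem S : ℝ) / #S + (minInside mem hι S : ℝ) / #S = 1 := by
  rw [← add_div, div_eq_one_iff_eq (by simpa using hS.ne_empty)]
  exact_mod_cast maxOutside_add_minInside mem hι S

theorem maxOutside_pos {S : Finset α} (hS : S.Nonempty) (h : ∀ v, ∃ e, ¬ mem v e) :
    0 < maxOutside mem S := by
  obtain ⟨v, hv⟩ := hS
  obtain ⟨e, he⟩ := h v
  exact (card_pos.mpr ⟨v, mem_filter.mpr ⟨hv, he⟩⟩).trans_le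
    (le_sup (f := fun e => #{v ∈ S | ¬ mem v e}) (mem_univ e))

theorem nonempty_of_maxOutside_pos {S : Finset α} (h : 0 < maxOutside mem S) : S.Nonempty :=
  nonempty_of_ne_empty fun hS => by simp [hS, maxOutside] at h

theorem nonempty_of_minInside_pos (hι : (univ : Finset ι).Nonempty) {S : Finset α}
    (h : 0 < minInside mem hι S) : S.Nonempty := by
  obtain ⟨e, he⟩ := hι
  exact nonempty_of_ne_empty fun hS => by
    simpa [hS] using h.trans_le (inf'_le (fun e => #{v ∈ S | mem v e}) he)

theorem exists_one_lt_card_div_maxOutside [Fintype α] (hι : (univ : Finset ι).Nonempty)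
    (hEdge : ∀ e, ∃ v, mem v e) (hVertex : ∀ v, ∃ e, ¬ mem v e) :
    ∃ S : Finset α, 0 < maxOutside mem S ∧ 1 < (#S : ℝ) / maxOutside mem S := by
  have hInside : 0 < minInside mem hι univ :=
    (lt_inf'_iff _).mpr fun e _ => by
      obtain ⟨v, hv⟩ := hEdge e
      exact card_pos.mpr ⟨v, mem_filter.mpr ⟨mem_univ v, hv⟩⟩
  have hOutside : 0 < maxOutside mem univ :=
    maxOutside_pos mem (nonempty_of_minInside_pos mem hι hInside) hVertex
  refine ⟨univ, hOutside, (one_lt_div (by exact_mod_cast hOutside)).mpr ?_⟩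
  have := maxOutside_add_minInside mem hι univ
  exact_mod_cast (by omega : maxOutside mem univ < #(univ : Finset α))

end Incidence

open Incidence

/-- For a nontrivial finite hypergraph `H` (no empty edge, no universal vertex):
`1/α(H̄) + 1/β(H*) = 1`, where `H̄` is the complement and `H*` the dual of `H`;
`α(H̄) = max {|S| / max_e |S ∖ e| : S ⊆ V}` and
`β(H*) = min {|Z| / min_e |Z ∩ e| : Z ⊆ V}` (over sets with positive denominator). -/
theorem stmt13 {n m : ℕ} (hm : 0 < m) (mem : Fin n → Fin m → Bool)
    (hNoEmptyEdge : ∀ e : Fin m, ∃ v : Fin n, mem v e)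
    (hNoUniversalVertex : ∀ v : Fin n, ∃ e : Fin m, ¬ mem v e)
    (a b : ℝ)
    (ha : IsGreatest {q : ℝ | ∃ S : Finset (Fin n),
        0 < Finset.univ.sup (fun e : Fin m => (S.filter (fun v => ¬ mem v e)).card) ∧
        q = (S.card : ℝ) /
          ((Finset.univ.sup (fun e : Fin m => (S.filter (fun v => ¬ mem v e)).card) : ℕ) : ℝ)} a)
    (hb : IsLeast {q : ℝ | ∃ Z : Finset (Fin n),
        0 < Finset.univ.inf' ⟨⟨0, hm⟩, Finset.mem_univ _⟩
          (fun e : Fin m => (Z.filter (fun v => mem v e)).card) ∧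
        q = (Z.card : ℝ) /
          ((Finset.univ.inf' ⟨⟨0, hm⟩, Finset.mem_univ _⟩
            (fun e : Fin m => (Z.filter (fun v => mem v e)).card) : ℕ) : ℝ)} b) :
    1 / a + 1 / b = 1 := by
  obtain ⟨⟨S, hDS, rfl⟩, ha⟩ := ha
  obtain ⟨⟨Z, hdZ, rfl⟩, hb⟩ := hb
  set hι : (univ : Finset (Fin m)).Nonempty := ⟨⟨0, hm⟩, mem_univ _⟩
  show 1 / ((#S : ℝ) / maxOutside mem S) + 1 / ((#Z : ℝ) / minInside mem hι Z) = 1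
  have hS : S.Nonempty := nonempty_of_maxOutside_pos mem hDS
  have hZ : Z.Nonempty := nonempty_of_minInside_pos mem hι hdZ
  have hDZ : 0 < maxOutside mem Z := maxOutside_pos mem hZ hNoUniversalVertex
  have hdS : 0 < minInside mem hι S := by
    obtain ⟨U, hU, hU_gt⟩ :=
      exists_one_lt_card_div_maxOutside mem hι hNoEmptyEdge hNoUniversalVertex
    have ha_gt : 1 < (#S : ℝ) / maxOutside mem S := hU_gt.trans_le (ha ⟨U, hU, rfl⟩)
    by_contra! h0
    have hD : maxOutside mem S = #S := by
      have := maxOutside_add_minInside mem hι S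
      omega
    rw [hD, div_self (by simpa using hS.ne_empty)] at ha_gt
    exact ha_gt.false
  have ha_ge : (#Z : ℝ) / maxOutside mem Z ≤ #S / maxOutside mem S := ha ⟨Z, hDZ, rfl⟩
  have hb_le : (#Z : ℝ) / minInside mem hι Z ≤ #S / minInside mem hι S := hb ⟨S, hdS, rfl⟩
  have hZ_card := hZ.card_pos
  have h_outside := one_div_le_one_div_of_le (by positivity) ha_ge
  have h_inside := one_div_le_one_div_of_le (by positivity) hb_le
  rw [one_div_div, one_div_div] at h_outside h_inside ⊢
  linarith [maxOutside_div_card_add_minInside_div_card mem hι hS,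
    maxOutside_div_card_add_minInside_div_card mem hι hZ]
end

section
/- Let M be a nontrivial matroid (rank at least 1 and no coloop). Then the fractional transversal number of the basis hypergraph of M equals the edge toughness of M: τ_f(H_B(M)) = σ'(M), where σ'(M) = min over S ⊆ V with ρ_M(V) > ρ_M(S) of |V∖S|/(ρ_M(V) − ρ_M(S)). -/
open Classical

/-- The rank of a subset of a (finite) matroid, computed as the largest intersection of
the subset with a basis. -/
noncomputable def matroidRank {n : ℕ} (M : Matroid (Fin n)) (S : Finset (Fin n)) : ℕ :=
  sSup {k : ℕ | ∃ B : Set (Fin n), M.IsBase B ∧ k = (S.filter (· ∈ B)).card}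

/-!
Giving each element outside `S` the weight `(ρ(V) - ρ(S))⁻¹` yields a fractional transversal of
value `|V ∖ S| / (ρ(V) - ρ(S))`, because every basis meets `V ∖ S` in at least `ρ(V) - ρ(S)`
elements. Conversely, let `x` be a fractional transversal and `B` a basis of minimum `x`-weight.
An exchange argument shows that `B` meets every sublevel set `{x ≤ t}` in a set of size at least
`ρ({x ≤ t})`, so `σ' · |B ∩ {x > t}| ≤ σ' · (ρ(V) - ρ({x ≤ t})) ≤ |{x > t}|`. Integrating over `t`
(the layer-cake formula) gives `σ' ≤ σ' · x(B) ≤ x(V)`.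
-/

open Finset MeasureTheory

theorem mul_sum_le_sum_of_forall_mul_card_lt_le {ι : Type*} [Fintype ι] {x : ι → ℝ} (hx : 0 ≤ x)
    (W : Finset ι) {s : ℝ} (hs : 0 ≤ s)
    (h : ∀ t : ℝ, s * #{v ∈ W | t < x v} ≤ #{v | t < x v}) :
    s * ∑ v ∈ W, x v ≤ ∑ v, x v := by
  -- Both sums are layer-cake integrals: for the counting measure on `ι` and its restriction to `W`.
  let _ : MeasurableSpace ι := ⊤
  have : MeasurableSingletonClass ι := ⟨fun _ => trivial⟩
  have layer_cake (μ : Measure ι) :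
      ∫⁻ v, ENNReal.ofReal (x v) ∂μ = ∫⁻ t in Set.Ioi 0, μ {v | t < x v} :=
    lintegral_eq_lintegral_meas_lt μ (ae_of_all _ hx) (measurable_of_countable x).aemeasurable
  have hW := layer_cake (Measure.count.restrict W)
  have huniv := layer_cake Measure.count
  rw [lintegral_finset] at hW
  rw [lintegral_fintype (μ := Measure.count)] at huniv
  simp only [Measure.count_singleton, mul_one] at hW huniv
  rw [← ENNReal.ofReal_le_ofReal_iff (sum_nonneg fun v _ => hx v), ENNReal.ofReal_mul hs,
    ENNReal.ofReal_sum_of_nonneg (fun v _ => hx v), ENNReal.ofReal_sum_of_nonneg (fun v _ => hx v),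
    huniv, hW, ← lintegral_const_mul' _ _ ENNReal.ofReal_ne_top]
  refine lintegral_mono fun t => ?_
  have hWt : {v | t < x v} ∩ ↑W = ↑({v ∈ W | t < x v} : Finset ι) := by ext; simp [and_comm]
  have hUt : {v | t < x v} = ↑({v | t < x v} : Finset ι) := by ext; simp
  rw [Measure.restrict_apply MeasurableSet.of_discrete, hWt, hUt, Measure.count_apply_finset,
    Measure.count_apply_finset, ← ENNReal.ofReal_natCast, ← ENNReal.ofReal_natCast,
    ← ENNReal.ofReal_mul hs]
  exact ENNReal.ofReal_le_ofReal (h t)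

theorem sum_indicator_insert_sdiff_singleton {α : Type*} [Fintype α] (x : α → ℝ) {B : Set α}
    {e f : α} (he : e ∉ B) (hf : f ∈ B) :
    ∑ v, (insert e (B \ {f})).indicator x v = ∑ v, B.indicator x v - x f + x e := by
  have hpt (v : α) : (insert e (B \ {f})).indicator x v + (if v = f then x f else 0) =
      B.indicator x v + (if v = e then x e else 0) := by
    by_cases hve : v = e
    · subst hve
      have : v ≠ f := fun h => he (h ▸ hf)
      simp [he, this]
    · by_cases hvf : v = f
      · subst hvf; simp [hve, hf]
      · simp [Set.indicator_apply, hve, hvf]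
  have := congrArg (fun g : α → ℝ => ∑ v, g v) (funext hpt)
  simp only [sum_add_distrib, sum_ite_eq', mem_univ, if_true] at this
  linarith

theorem Matroid.IsBase.exists_isBase_insert_sdiff_singleton {α : Type*} {M : Matroid α}
    {B I : Set α} {e : α} (hB : M.IsBase B) (hIB : I ⊆ B) (heB : e ∉ B)
    (hI : M.Indep (insert e I)) : ∃ f ∈ B \ I, M.IsBase (insert e (B \ {f})) := by
  obtain ⟨B₂, hB₂, hIB₂, hB₂B⟩ := hI.exists_isBase_subset_union_isBase hB
  have heB₂ : e ∈ B₂ \ B := ⟨hIB₂ (Set.mem_insert _ _), heB⟩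
  obtain ⟨f, hf⟩ : (B \ B₂).Nonempty := by
    rw [← Set.encard_pos, hB.encard_sdiff_comm hB₂]
    exact Set.encard_pos.2 ⟨e, heB₂⟩
  obtain ⟨y, hy, hbase⟩ := hB.exchange hB₂ hf
  obtain rfl : y = e := by
    rcases hB₂B hy.1 with (rfl | hyI) | hyB
    · rfl
    · exact absurd (hIB hyI) hy.2
    · exact absurd hyB hy.2
  exact ⟨f, ⟨hf.1, fun hfI => hf.2 (hIB₂ (Set.mem_insert_of_mem _ hfI))⟩, hbase⟩

section

variable {n : ℕ}

theorem matroidRank_bddAbove (M : Matroid (Fin n)) (S : Finset (Fin n)) :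
    BddAbove {k : ℕ | ∃ B : Set (Fin n), M.IsBase B ∧ k = #{v ∈ S | v ∈ B}} :=
  ⟨#S, by rintro k ⟨B, -, rfl⟩; exact card_filter_le _ _⟩

theorem card_filter_mem_le_matroidRank (M : Matroid (Fin n)) (S : Finset (Fin n))
    {B : Set (Fin n)} (hB : M.IsBase B) : #{v ∈ S | v ∈ B} ≤ matroidRank M S :=
  le_csSup (matroidRank_bddAbove M S) ⟨B, hB, rfl⟩

theorem exists_isBase_card_filter_mem_eq_matroidRank (M : Matroid (Fin n)) (S : Finset (Fin n)) :
    ∃ B, M.IsBase B ∧ #{v ∈ S | v ∈ B} = matroidRank M S := by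
  obtain ⟨B, hB⟩ := M.exists_isBase
  obtain ⟨B', hB', h⟩ :=
    Nat.sSup_mem (s := {k | ∃ B : Set (Fin n), M.IsBase B ∧ k = #{v ∈ S | v ∈ B}})
      ⟨_, B, hB, rfl⟩ (matroidRank_bddAbove M S)
  exact ⟨B', hB', h.symm⟩

theorem Matroid.IsBase.card_filter_mem_eq_matroidRank_univ {M : Matroid (Fin n)}
    {B : Set (Fin n)} (hB : M.IsBase B) : #{v | v ∈ B} = matroidRank M univ := by
  have hcard (B : Set (Fin n)) : (#{v | v ∈ B} : ℕ∞) = B.encard := by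
    rw [← Set.encard_coe_eq_coe_finsetCard]; simp
  obtain ⟨B', hB', h⟩ := exists_isBase_card_filter_mem_eq_matroidRank M univ
  rw [← h]
  exact_mod_cast (hcard B).trans ((hB.encard_eq_encard_of_isBase hB').trans (hcard B').symm)

theorem Matroid.IsBase.card_filter_mem_add_card_compl_filter_mem {M : Matroid (Fin n)}
    {B : Set (Fin n)} (hB : M.IsBase B) (S : Finset (Fin n)) :
    #{v ∈ S | v ∈ B} + #{v ∈ Sᶜ | v ∈ B} = matroidRank M univ := by
  rw [← card_union_of_disjoint (disjoint_filter_filter disjoint_compl_right), ← filter_union,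
    union_compl, hB.card_filter_mem_eq_matroidRank_univ]

theorem Matroid.IsBase.matroidRank_le_card_filter_mem_of_forall_weight_le
    {M : Matroid (Fin n)} {x : Fin n → ℝ} {B : Set (Fin n)} (hB : M.IsBase B)
    (hmin : ∀ B', M.IsBase B' → ∑ v, B.indicator x v ≤ ∑ v, B'.indicator x v) (t : ℝ) :
    matroidRank M {v | x v ≤ t} ≤ #{v ∈ {v | x v ≤ t} | v ∈ B} := by
  set L : Finset (Fin n) := {v | x v ≤ t}
  by_contra! hlt
  obtain ⟨B', hB', hB'L⟩ := exists_isBase_card_filter_mem_eq_matroidRank M L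
  have hIB : (↑({v ∈ L | v ∈ B} : Finset (Fin n)) : Set (Fin n)) ⊆ B := by simp [Set.subset_def]
  obtain ⟨e, heB', heI, hind⟩ := (hB.indep.subset hIB).augment_finset
    (hB'.indep.subset (by simp [Set.subset_def])) (hB'L ▸ hlt)
  have heL : x e ≤ t := by simpa [L] using (mem_filter.1 heB').1
  have heB : e ∉ B := fun h => heI (by simp [L, heL, h])
  obtain ⟨f, ⟨hfB, hfI⟩, hbase⟩ := hB.exists_isBase_insert_sdiff_singleton hIB heB hind
  have hfL : t < x f := by by_contra! h; exact hfI (by simp [L, h, hfB])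
  have := hmin _ hbase
  rw [sum_indicator_insert_sdiff_singleton x heB hfB] at this
  linarith

theorem Matroid.IsBase.matroidRank_univ_sub_le_card_compl_filter_mem {M : Matroid (Fin n)}
    {B : Set (Fin n)} (hB : M.IsBase B) (S : Finset (Fin n)) :
    (matroidRank M univ : ℝ) - matroidRank M S ≤ #{v ∈ Sᶜ | v ∈ B} := by
  have hsplit := hB.card_filter_mem_add_card_compl_filter_mem S
  have hS := card_filter_mem_le_matroidRank M S hB
  rw [← hsplit]
  push_cast
  linarith [(Nat.cast_le (α := ℝ)).2 hS]

theorem exists_fractional_transversal_of_matroidRank_lt (M : Matroid (Fin n)) {S : Finset (Fin n)}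
    (hS : matroidRank M S < matroidRank M univ) :
    ∃ x : Fin n → ℝ, 0 ≤ x ∧
      (∀ B : Set (Fin n), M.IsBase B → 1 ≤ ∑ v : Fin n, (if v ∈ B then x v else 0)) ∧
      (#Sᶜ : ℝ) / ((matroidRank M univ : ℝ) - matroidRank M S) = ∑ v : Fin n, x v := by
  set d : ℝ := (matroidRank M univ : ℝ) - matroidRank M S
  have hd : 0 < d := sub_pos.2 (by exact_mod_cast hS)
  have hsum (W : Finset (Fin n)) :
      ∑ v ∈ W, (if v ∈ S then 0 else d⁻¹) = #{v ∈ W | v ∈ Sᶜ} * d⁻¹ := by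
    simp [sum_ite, mul_comm]
  refine ⟨fun v => if v ∈ S then 0 else d⁻¹, fun v => ?_, fun B hB => ?_, ?_⟩
  · dsimp only; split <;> positivity
  · have hcard : #{v ∈ {v | v ∈ B} | v ∈ Sᶜ} = #{v ∈ Sᶜ | v ∈ B} := by
      congr 1; ext; simp [and_comm]
    rw [← sum_filter, hsum, hcard, ← div_eq_mul_inv, le_div_iff₀ hd, one_mul]
    exact hB.matroidRank_univ_sub_le_card_compl_filter_mem S
  · rw [hsum, div_eq_mul_inv, filter_univ_mem]

theorem mul_sub_matroidRank_le_card_compl (M : Matroid (Fin n)) {s : ℝ} (hs0 : 0 ≤ s)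
    (hs : ∀ S : Finset (Fin n), matroidRank M S < matroidRank M univ →
      s ≤ (#Sᶜ : ℝ) / ((matroidRank M univ : ℝ) - matroidRank M S))
    (S : Finset (Fin n)) :
    s * ((matroidRank M univ : ℝ) - matroidRank M S) ≤ #Sᶜ := by
  rcases lt_or_ge (matroidRank M S) (matroidRank M univ) with hlt | hge
  · exact (le_div_iff₀ (sub_pos.2 (by exact_mod_cast hlt))).1 (hs S hlt)
  · exact (mul_nonpos_of_nonneg_of_nonpos hs0 (sub_nonpos.2 (by exact_mod_cast hge))).trans
      (Nat.cast_nonneg _)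

theorem le_sum_of_forall_mul_sub_matroidRank_le (M : Matroid (Fin n)) {s : ℝ} (hs0 : 0 ≤ s)
    (hs : ∀ S : Finset (Fin n), s * ((matroidRank M univ : ℝ) - matroidRank M S) ≤ #Sᶜ)
    {x : Fin n → ℝ} (hx0 : 0 ≤ x)
    (hx : ∀ B : Set (Fin n), M.IsBase B → 1 ≤ ∑ v : Fin n, (if v ∈ B then x v else 0)) :
    s ≤ ∑ v, x v := by
  obtain ⟨B, hB, hmin⟩ := Set.exists_min_image {B | M.IsBase B}
    (fun B => ∑ v, B.indicator x v) (Set.toFinite _) M.exists_isBase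
  have hcut (t : ℝ) : s * #{v ∈ {v | v ∈ B} | t < x v} ≤ #{v | t < x v} := by
    set L : Finset (Fin n) := {v | x v ≤ t}
    have hLc : Lᶜ = ({v | t < x v} : Finset (Fin n)) := by ext; simp [L]
    have hcard : #{v ∈ {v | v ∈ B} | t < x v} = #{v ∈ Lᶜ | v ∈ B} := by
      congr 1; ext; simp [L, and_comm]
    have hL := (Nat.cast_le (α := ℝ)).2
      (hB.matroidRank_le_card_filter_mem_of_forall_weight_le hmin t)
    have hsplit := hB.card_filter_mem_add_card_compl_filter_mem L
    rw [hcard, ← hLc]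
    calc s * #{v ∈ Lᶜ | v ∈ B} ≤ s * ((matroidRank M univ : ℝ) - matroidRank M L) := by
          refine mul_le_mul_of_nonneg_left ?_ hs0
          rw [← hsplit]
          push_cast
          linarith
      _ ≤ #Lᶜ := hs L
  calc s ≤ s * ∑ v, B.indicator x v := le_mul_of_one_le_right hs0 (hx B hB)
    _ = s * ∑ v ∈ {v | v ∈ B}, x v := by rw [sum_filter]; rfl
    _ ≤ ∑ v, x v := mul_sum_le_sum_of_forall_mul_card_lt_le hx0 _ hs0 hcut

end

theorem stmt14_general {n : ℕ} (M : Matroid (Fin n))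
    (t s : ℝ)
    -- fractional transversal number of the basis hypergraph
    (ht : IsLeast {r : ℝ | ∃ x : Fin n → ℝ, 0 ≤ x ∧
        (∀ B : Set (Fin n), M.IsBase B → 1 ≤ ∑ v : Fin n, (if v ∈ B then x v else 0)) ∧
        r = ∑ v : Fin n, x v} t)
    -- edge toughness σ'(M)
    (hs : IsLeast {q : ℝ | ∃ S : Finset (Fin n),
        matroidRank M S < matroidRank M Finset.univ ∧
        q = (Sᶜ.card : ℝ) / ((matroidRank M Finset.univ : ℝ) - (matroidRank M S : ℝ))} s) :
    t = s := by
  obtain ⟨⟨S, hS, rfl⟩, hs_le⟩ := hs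
  obtain ⟨⟨x, hx0, hx, rfl⟩, ht_le⟩ := ht
  have hs0 : 0 ≤ (#Sᶜ : ℝ) / ((matroidRank M univ : ℝ) - matroidRank M S) :=
    div_nonneg (Nat.cast_nonneg _) (sub_nonneg.2 (by exact_mod_cast hS.le))
  refine le_antisymm (ht_le (exists_fractional_transversal_of_matroidRank_lt M hS)) ?_
  exact le_sum_of_forall_mul_sub_matroidRank_le M hs0
    (mul_sub_matroidRank_le_card_compl M hs0 fun S' hS' => hs_le ⟨S', hS', rfl⟩) hx0 hx

/-- For a nontrivial matroid `M` (rank at least 1 and no coloop), the fractional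
transversal number of the basis hypergraph of `M` equals the edge toughness
`σ'(M) = min {|V∖S| / (ρ(V) - ρ(S)) : ρ(V) > ρ(S)}`. -/
theorem stmt14 {n : ℕ} (M : Matroid (Fin n)) (hE : M.E = Set.univ)
    (hrank : 1 ≤ matroidRank M Finset.univ)
    (hNoColoop : ∀ v : Fin n, ∃ B : Set (Fin n), M.IsBase B ∧ v ∉ B)
    (t s : ℝ)
    -- fractional transversal number of the basis hypergraph
    (ht : IsLeast {r : ℝ | ∃ x : Fin n → ℝ, 0 ≤ x ∧
        (∀ B : Set (Fin n), M.IsBase B → 1 ≤ ∑ v : Fin n, (if v ∈ B then x v else 0)) ∧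
        r = ∑ v : Fin n, x v} t)
    -- edge toughness σ'(M)
    (hs : IsLeast {q : ℝ | ∃ S : Finset (Fin n),
        matroidRank M S < matroidRank M Finset.univ ∧
        q = (Sᶜ.card : ℝ) / ((matroidRank M Finset.univ : ℝ) - (matroidRank M S : ℝ))} s) :
    t = s :=
  stmt14_general M t s ht hs
end

section
/- For any nonempty finite graph G (at least one edge), 1/κ_f(G) + 1/χ_f(G) = 1, where κ_f(G) is the fractional matching number of the hypergraph of vertex covers of G and χ_f(G) is the fractional chromatic number of G. -/
private lemma compl_sum {n : ℕ} (f : Finset (Fin n) → ℝ) :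
    ∑ S : Finset (Fin n), f Sᶜ = ∑ S : Finset (Fin n), f S :=
  Fintype.sum_bijective compl (Function.Involutive.bijective compl_compl)
    (fun S => f Sᶜ) f (fun _ => rfl)

private lemma split_sum {n : ℕ} (x : Finset (Fin n) → ℝ) (v : Fin n) :
    ∑ S : Finset (Fin n), (if v ∈ S then x S else 0)
      + ∑ S : Finset (Fin n), (if v ∉ S then x S else 0)
      = ∑ S : Finset (Fin n), x S := by
  rw [← Finset.sum_add_distrib]
  refine Finset.sum_congr rfl fun S _ => ?_
  by_cases h : v ∈ S <;> simp [h]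

/-- For any finite graph `G` with at least one edge, `1/κ_f(G) + 1/χ_f(G) = 1`, where
`κ_f(G)` is the fractional matching number of the hypergraph of vertex covers of `G`
and `χ_f(G)` is the fractional chromatic number of `G`. -/
theorem stmt15 {n : ℕ} (G : SimpleGraph (Fin n)) (hE : ∃ u v, G.Adj u v)
    (kf cf : ℝ)
    -- κ_f(G): fractional matching over vertex covers
    (hkf : IsGreatest {s : ℝ | ∃ y : Finset (Fin n) → ℝ, 0 ≤ y ∧
        (∀ S : Finset (Fin n), ¬ (∀ u v, G.Adj u v → u ∈ S ∨ v ∈ S) → y S = 0) ∧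
        (∀ v : Fin n, ∑ S : Finset (Fin n), (if v ∈ S then y S else 0) ≤ 1) ∧
        s = ∑ S : Finset (Fin n), y S} kf)
    -- χ_f(G): fractional covering by independent sets
    (hcf : IsLeast {s : ℝ | ∃ x : Finset (Fin n) → ℝ, 0 ≤ x ∧
        (∀ J : Finset (Fin n), ¬ (∀ u ∈ J, ∀ v ∈ J, ¬ G.Adj u v) → x J = 0) ∧
        (∀ v : Fin n, 1 ≤ ∑ J : Finset (Fin n), (if v ∈ J then x J else 0)) ∧
        s = ∑ J : Finset (Fin n), x J} cf) :
    1 / kf + 1 / cf = 1 := by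
  obtain ⟨u0, v0, huv⟩ := hE
  obtain ⟨⟨y, hy0, hyVC, hycon, hys⟩, hkmax⟩ := hkf
  obtain ⟨⟨x, hx0, hxind, hxcon, hxs⟩, hcmin⟩ := hcf
  -- cf ≥ 2
  have hcf2 : (2 : ℝ) ≤ cf := by
    have key : ∀ J : Finset (Fin n),
        (if u0 ∈ J then x J else 0) + (if v0 ∈ J then x J else 0) ≤ x J := by
      intro J
      by_cases hJ : (∀ u ∈ J, ∀ v ∈ J, ¬ G.Adj u v)
      · have hxJ : (0:ℝ) ≤ x J := hx0 J
        by_cases hu : u0 ∈ J <;> by_cases hv : v0 ∈ J <;> simp [hu, hv, hxJ]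
        exact absurd huv (hJ u0 hu v0 hv)
      · simp [hxind J hJ]
    have h1 := hxcon u0
    have h2 := hxcon v0
    have h3 : ∑ J : Finset (Fin n), ((if u0 ∈ J then x J else 0) + (if v0 ∈ J then x J else 0))
        ≤ ∑ J : Finset (Fin n), x J := Finset.sum_le_sum fun J _ => key J
    rw [Finset.sum_add_distrib] at h3
    linarith [hxs ▸ h3]
  have hc1 : (1 : ℝ) < cf := by linarith
  have hcd : (0 : ℝ) < cf - 1 := by linarith
  -- (A): kf ≥ cf/(cf-1)
  have hA : cf / (cf - 1) ≤ kf := by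
    apply hkmax
    refine ⟨fun S => x Sᶜ / (cf - 1), fun S => div_nonneg (hx0 _) hcd.le, ?_, ?_, ?_⟩
    · intro S hS
      have : ¬ (∀ u ∈ Sᶜ, ∀ v ∈ Sᶜ, ¬ G.Adj u v) := by
        intro hind
        exact hS fun u v huv' => by
          by_contra hcon
          push_neg at hcon
          exact hind u (Finset.mem_compl.2 hcon.1) v (Finset.mem_compl.2 hcon.2) huv'
      simp [hxind _ this]
    · intro v
      have e1 : ∑ S : Finset (Fin n), (if v ∈ S then x Sᶜ / (cf - 1) else 0)
          = (∑ S : Finset (Fin n), (if v ∈ S then x Sᶜ else 0)) / (cf - 1) := by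
        rw [Finset.sum_div]
        refine Finset.sum_congr rfl fun S _ => ?_
        by_cases h : v ∈ S <;> simp [h]
      have e2 : ∑ S : Finset (Fin n), (if v ∈ S then x Sᶜ else 0)
          = ∑ S : Finset (Fin n), (if v ∉ S then x S else 0) := by
        rw [← compl_sum (fun S => if v ∉ S then x S else 0)]
        refine Finset.sum_congr rfl fun S _ => ?_
        simp
      have e3 := split_sum x v
      have h1 := hxcon v
      rw [e1, e2]
      rw [div_le_one hcd]
      linarith [hxs ▸ e3]
    · have h := compl_sum (fun S => x S / (cf - 1))
      simp only at h ⊢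
      rw [h, ← Finset.sum_div, ← hxs]
  have hk1 : (1 : ℝ) < kf := lt_of_lt_of_le (by rw [lt_div_iff₀ hcd]; linarith) hA
  have hkd : (0 : ℝ) < kf - 1 := by linarith
  -- (B): cf ≤ kf/(kf-1)
  have hB : cf ≤ kf / (kf - 1) := by
    apply hcmin
    refine ⟨fun J => y Jᶜ / (kf - 1), fun J => div_nonneg (hy0 _) hkd.le, ?_, ?_, ?_⟩
    · intro J hJ
      have : ¬ (∀ u v, G.Adj u v → u ∈ Jᶜ ∨ v ∈ Jᶜ) := by
        intro hvc
        apply hJ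
        intro u hu v hv hadj
        rcases hvc u v hadj with h | h
        · exact (Finset.mem_compl.1 h) hu
        · exact (Finset.mem_compl.1 h) hv
      simp [hyVC _ this]
    · intro v
      have e1 : ∑ J : Finset (Fin n), (if v ∈ J then y Jᶜ / (kf - 1) else 0)
          = (∑ J : Finset (Fin n), (if v ∈ J then y Jᶜ else 0)) / (kf - 1) := by
        rw [Finset.sum_div]
        refine Finset.sum_congr rfl fun J _ => ?_
        by_cases h : v ∈ J <;> simp [h]
      have e2 : ∑ J : Finset (Fin n), (if v ∈ J then y Jᶜ else 0)
          = ∑ J : Finset (Fin n), (if v ∉ J then y J else 0) := by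
        rw [← compl_sum (fun S => if v ∉ S then y S else 0)]
        refine Finset.sum_congr rfl fun S _ => ?_
        simp
      have e3 := split_sum y v
      have h1 := hycon v
      rw [e1, e2, le_div_iff₀ hkd]
      linarith [hys ▸ e3]
    · have h := compl_sum (fun S => y S / (kf - 1))
      simp only at h ⊢
      rw [h, ← Finset.sum_div, ← hys]
  have hAB1 : cf ≤ kf * (cf - 1) := by
    rw [div_le_iff₀ hcd] at hA; linarith
  have hAB2 : cf * (kf - 1) ≤ kf := by
    rw [le_div_iff₀ hkd] at hB; linarith
  have hkpos : (0:ℝ) < kf := by linarith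
  have hcpos : (0:ℝ) < cf := by linarith
  have : kf * cf = kf + cf := by nlinarith
  field_simp
  linarith
end

section
/- For the complete graph K_n on n ≥ 2 vertices and any positive integer b, the maximum number T(b) of vertex covers S₁,…,S_t of K_n such that each vertex belongs to at most b of them equals ⌊nb/(n−1)⌋. -/
/-- Counting lemma: among `0,...,t-1` at least `t/n` numbers are `≡ r (mod n)`. -/
lemma aux_count (t n r : ℕ) (hn : 0 < n) (hr : r < n) :
    t / n ≤ ((Finset.range t).filter (fun i => i % n = r)).card := by
  have hsub : (Finset.range (t / n)).image (fun q => q * n + r) ⊆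
      (Finset.range t).filter (fun i => i % n = r) := by
    intro x hx
    simp only [Finset.mem_image, Finset.mem_range] at hx
    obtain ⟨q, hq, rfl⟩ := hx
    simp only [Finset.mem_filter, Finset.mem_range]
    constructor
    · have h1 : (q + 1) * n ≤ (t / n) * n := Nat.mul_le_mul_right n hq
      have h2 : (t / n) * n ≤ t := Nat.div_mul_le_self _ _
      have : (q + 1) * n = q * n + n := by ring
      omega
    · rw [mul_comm, Nat.mul_add_mod, Nat.mod_eq_of_lt hr]
  have hinj : ((Finset.range (t / n)).image (fun q => q * n + r)).card = t / n := by
    rw [Finset.card_image_of_injective _ ?_, Finset.card_range]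
    intro a c hac
    simp only at hac
    have : a * n = c * n := by omega
    exact Nat.eq_of_mul_eq_mul_right hn this
  calc t / n = _ := hinj.symm
    _ ≤ _ := Finset.card_le_card hsub

lemma aux_fin_card (t : ℕ) (p : ℕ → Prop) [DecidablePred p] :
    (Finset.univ.filter (fun i : Fin t => p i.val)).card
      = ((Finset.range t).filter p).card := by
  refine Finset.card_bij (fun i _ => i.val) ?_ ?_ ?_
  · intro a ha
    simp only [Finset.mem_filter, Finset.mem_univ, true_and] at ha
    simp [Finset.mem_filter, Finset.mem_range, a.isLt, ha]
  · intro a _ c _ h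
    exact Fin.val_injective h
  · intro a ha
    simp only [Finset.mem_filter, Finset.mem_range] at ha
    exact ⟨⟨a, ha.1⟩, by simp [Finset.mem_filter, ha.2], rfl⟩

/-- For the complete graph `K_n` (`n ≥ 2`) and any budget `b ≥ 1`, the maximum number of
vertex covers such that every vertex belongs to at most `b` of them is `⌊nb/(n-1)⌋`. -/
theorem stmt17 {n : ℕ} (hn : 2 ≤ n) (b : ℕ) (hb : 0 < b) :
    IsGreatest {t : ℕ | ∃ S : Fin t → Finset (Fin n),
        (∀ i, ∀ u v : Fin n, u ≠ v → u ∈ S i ∨ v ∈ S i) ∧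
        (∀ v : Fin n, (Finset.univ.filter (fun i => v ∈ S i)).card ≤ b)}
      (n * b / (n - 1)) := by
  have hn0 : 0 < n := by omega
  set t := n * b / (n - 1) with ht
  have htmul : t * (n - 1) ≤ n * b := Nat.div_mul_le_self _ _
  constructor
  · -- membership: cover i omits only vertex `i % n`
    refine ⟨fun i => Finset.univ.erase ⟨i.val % n, Nat.mod_lt _ hn0⟩, ?_, ?_⟩
    · intro i u v huv
      by_contra h
      push_neg at h
      obtain ⟨hu, hv⟩ := h
      simp [Finset.mem_erase] at hu hv
      exact huv (hu.trans hv.symm)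
    · intro v
      have key : t / n ≤ (Finset.univ.filter
          (fun i : Fin t => i.val % n = v.val)).card := by
        rw [aux_fin_card t (fun i => i % n = v.val)]
        exact aux_count t n v.val hn0 v.isLt
      have hsplit : (Finset.univ.filter (fun i : Fin t => v ∈ Finset.univ.erase
          (⟨i.val % n, Nat.mod_lt _ hn0⟩ : Fin n))).card
          = t - (Finset.univ.filter (fun i : Fin t => i.val % n = v.val)).card := by
        have hpred : ∀ i : Fin t,
            (v ∈ Finset.univ.erase (⟨i.val % n, Nat.mod_lt _ hn0⟩ : Fin n))
              ↔ ¬ (i.val % n = v.val) := by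
          intro i
          simp [Finset.mem_erase, Fin.ext_iff, eq_comm]
        rw [Finset.filter_congr (fun i _ => hpred i)]
        have := Finset.card_filter_add_card_filter_not
          (s := (Finset.univ : Finset (Fin t)))
          (p := fun i : Fin t => i.val % n = v.val)
        simp only [Finset.card_univ, Fintype.card_fin] at this
        omega
      rw [hsplit]
      -- now show t - t/n ≤ b
      have hkm := Nat.div_add_mod t n
      have hm : t % n < n := Nat.mod_lt _ hn0
      have e : t * (n - 1) + t = t * n := by
        rw [← Nat.mul_succ]; congr 1; omega
      have h3 : t * n ≤ n * b + t := by omega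
      have hfin : t ≤ b + t / n := by
        by_contra hcon
        push_neg at hcon
        -- t ≥ b + t/n + 1 ; multiply by n
        have h4 : n * (b + t / n + 1) ≤ n * t := Nat.mul_le_mul_left n hcon
        have h5 : n * t = n * (n * (t / n) + t % n) := by rw [hkm]
        nlinarith [hkm, hm, h3, h4]
      omega
  · -- upper bound
    rintro t' ⟨S, hcov, hbud⟩
    rw [ht, Nat.le_div_iff_mul_le (by omega : 0 < n - 1)]
    have hcard : ∀ i, n - 1 ≤ (S i).card := by
      intro i
      have hcompl : (Finset.univ \ S i).card ≤ 1 := by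
        rw [Finset.card_le_one]
        intro a ha c hc
        simp only [Finset.mem_sdiff, Finset.mem_univ, true_and] at ha hc
        by_contra hac
        rcases hcov i a c hac with h | h
        · exact ha h
        · exact hc h
      have := Finset.card_sdiff_add_card_eq_card (Finset.subset_univ (S i))
      simp [Finset.card_univ] at this
      omega
    have hone : ∀ i, (S i).card = ∑ v : Fin n, if v ∈ S i then 1 else 0 := by
      intro i
      conv_lhs => rw [← Finset.filter_univ_mem (S i)]
      exact Finset.card_filter _ _
    have hsum : t' * (n - 1) ≤ ∑ i : Fin t', (S i).card :=
      calc t' * (n - 1) = ∑ _i : Fin t', (n - 1) := by simp [mul_comm]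
        _ ≤ ∑ i : Fin t', (S i).card := Finset.sum_le_sum fun i _ => hcard i
    have hswap : ∑ i : Fin t', (S i).card
        = ∑ v : Fin n, (Finset.univ.filter (fun i => v ∈ S i)).card := by
      calc ∑ i : Fin t', (S i).card
          = ∑ i : Fin t', ∑ v : Fin n, if v ∈ S i then 1 else 0 :=
            Finset.sum_congr rfl fun i _ => hone i
        _ = ∑ v : Fin n, ∑ i : Fin t', if v ∈ S i then 1 else 0 := Finset.sum_comm
        _ = ∑ v : Fin n, (Finset.univ.filter (fun i => v ∈ S i)).card :=
            Finset.sum_congr rfl fun v _ => (Finset.card_filter _ _).symm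
    have hle : ∑ v : Fin n, (Finset.univ.filter (fun i => v ∈ S i)).card ≤ n * b :=
      calc _ ≤ ∑ _v : Fin n, b := Finset.sum_le_sum fun v _ => hbud v
        _ = n * b := by simp [mul_comm]
    omega
end

section
/- Let G be a finite graph with at least one edge, and let b, c be positive integers. Then there exist b+c vertex covers of G such that every vertex belongs to at most b of them if and only if the lexicographic product G·K_c is (b+c)-colorable. -/
/-- For a finite graph `G` with at least one edge and positive integers `b, c`:
there exist `b + c` vertex covers of `G` with every vertex in at most `b` of them iff
the lexicographic product `G · K_c` is `(b + c)`-colorable. -/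
theorem stmt18 {n : ℕ} (G : SimpleGraph (Fin n)) (hE : ∃ u v, G.Adj u v)
    (b c : ℕ) (hb : 0 < b) (hc : 0 < c) :
    (∃ S : Fin (b + c) → Finset (Fin n),
        (∀ i, ∀ u v : Fin n, G.Adj u v → u ∈ S i ∨ v ∈ S i) ∧
        (∀ v : Fin n, (Finset.univ.filter (fun i => v ∈ S i)).card ≤ b)) ↔
      (SimpleGraph.fromRel
        (fun p q : Fin n × Fin c => G.Adj p.1 q.1 ∨ p.1 = q.1)).Colorable (b + c) := by
  constructor
  · rintro ⟨S, hcov, hcard⟩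
    have hF : ∀ v : Fin n, c ≤ (Finset.univ.filter (fun i => v ∉ S i)).card := by
      intro v
      have h1 := hcard v
      have h2 : (Finset.univ.filter (fun i => v ∈ S i)).card
          + (Finset.univ.filter (fun i => v ∉ S i)).card = b + c := by
        rw [Finset.card_filter_add_card_filter_not]
        simp
      omega
    refine ⟨SimpleGraph.Coloring.mk
      (fun p => (Finset.univ.filter (fun i => p.1 ∉ S i)).orderEmbOfCardLe (hF p.1) p.2) ?_⟩
    rintro ⟨u, a⟩ ⟨v, a'⟩ hadj heq
    rw [SimpleGraph.fromRel_adj] at hadj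
    obtain ⟨hne, hr⟩ := hadj
    simp only at heq
    have hmu : u ∉ S ((Finset.univ.filter (fun i => u ∉ S i)).orderEmbOfCardLe (hF u) a) := by
      have := Finset.orderEmbOfCardLe_mem _ (hF u) a
      simpa using this
    have hmv : v ∉ S ((Finset.univ.filter (fun i => v ∉ S i)).orderEmbOfCardLe (hF v) a') := by
      have := Finset.orderEmbOfCardLe_mem _ (hF v) a'
      simpa using this
    rcases hr with (h | h) | (h | h)
    · rw [heq] at hmu
      rcases hcov _ u v h with h' | h' <;> [exact hmu h'; exact hmv h']
    · subst h
      have : a = a' := ((Finset.univ.filter (fun i => u ∉ S i)).orderEmbOfCardLe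
        (hF u)).injective heq
      exact hne (by rw [this])
    · rw [heq] at hmu
      rcases hcov _ v u h with h' | h' <;> [exact hmv h'; exact hmu h']
    · subst h
      have : a = a' := ((Finset.univ.filter (fun i => v ∉ S i)).orderEmbOfCardLe
        (hF v)).injective heq
      exact hne (by rw [this])
  · rintro ⟨C⟩
    refine ⟨fun i => Finset.univ.filter (fun v => ∀ a : Fin c, C (v, a) ≠ i), ?_, ?_⟩
    · intro i u v huv
      by_contra h
      push_neg at h
      obtain ⟨h1, h2⟩ := h
      simp only [Finset.mem_filter, Finset.mem_univ, true_and, not_forall, not_not] at h1 h2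
      obtain ⟨a, ha⟩ := h1
      obtain ⟨a', ha'⟩ := h2
      have hne : ((u, a) : Fin n × Fin c) ≠ (v, a') := fun h =>
        G.ne_of_adj huv (congrArg Prod.fst h)
      have hadj : (SimpleGraph.fromRel
          (fun p q : Fin n × Fin c => G.Adj p.1 q.1 ∨ p.1 = q.1)).Adj (u, a) (v, a') := by
        rw [SimpleGraph.fromRel_adj]
        exact ⟨hne, Or.inl (Or.inl huv)⟩
      exact C.valid hadj (ha.trans ha'.symm)
    · intro v
      show (Finset.univ.filter (fun i => v ∈ Finset.univ.filter
        (fun w => ∀ a : Fin c, C (w, a) ≠ i))).card ≤ b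
      have hinj : Function.Injective (fun a : Fin c => C (v, a)) := by
        intro a a' h
        by_contra hne
        have hadj : (SimpleGraph.fromRel
            (fun p q : Fin n × Fin c => G.Adj p.1 q.1 ∨ p.1 = q.1)).Adj (v, a) (v, a') := by
          rw [SimpleGraph.fromRel_adj]
          exact ⟨by simp [hne], Or.inl (Or.inr rfl)⟩
        exact C.valid hadj h
      set I : Finset (Fin (b + c)) := Finset.univ.image (fun a : Fin c => C (v, a)) with hI
      have himg : I.card = c := by
        rw [hI, Finset.card_image_of_injective _ hinj, Finset.card_univ, Fintype.card_fin]
      have hdisj : Disjoint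
          (Finset.univ.filter (fun i => v ∈ Finset.univ.filter
            (fun w => ∀ a : Fin c, C (w, a) ≠ i))) I := by
        rw [Finset.disjoint_left]
        intro i hi hiI
        simp only [Finset.mem_filter, Finset.mem_univ, true_and] at hi
        rw [hI, Finset.mem_image] at hiI
        obtain ⟨a, _, ha⟩ := hiI
        exact hi a ha
      have hcards := Finset.card_union_of_disjoint hdisj
      have hle : ((Finset.univ.filter (fun i => v ∈ Finset.univ.filter
            (fun w => ∀ a : Fin c, C (w, a) ≠ i))) ∪ I).card ≤ b + c := by
        have := Finset.card_le_univ ((Finset.univ.filter (fun i => v ∈ Finset.univ.filter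
            (fun w => ∀ a : Fin c, C (w, a) ≠ i))) ∪ I)
        simpa using this
      omega
end

section
/- Let G be a finite graph with at least one edge. The following are equivalent: (a) G is bipartite; (b) for every positive integer b there exist 2b vertex covers of G with each vertex belonging to at most b of them; (c) for some positive integer b there exist 2b vertex covers of G with each vertex belonging to at most b of them. -/
lemma aux_colorable_to_covers {n : ℕ} (G : SimpleGraph (Fin n))
    (hcol : G.Colorable 2) (b : ℕ) (hb : 0 < b) :
    ∃ S : Fin (2 * b) → Finset (Fin n),
        (∀ i, ∀ u v : Fin n, G.Adj u v → u ∈ S i ∨ v ∈ S i) ∧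
        (∀ v : Fin n, (Finset.univ.filter (fun i => v ∈ S i)).card ≤ b) := by
  obtain ⟨C⟩ := hcol
  refine ⟨fun i => Finset.univ.filter (fun v => (C v : ℕ) = if (i : ℕ) < b then 0 else 1),
    ?_, ?_⟩
  · intro i u v hadj
    have hne : (C u : ℕ) ≠ (C v : ℕ) := fun h => C.valid hadj (Fin.ext h)
    have h1 : (C u : ℕ) < 2 := (C u).isLt
    have h2 : (C v : ℕ) < 2 := (C v).isLt
    simp only [Finset.mem_filter, Finset.mem_univ, true_and]
    by_cases hi : (i : ℕ) < b <;> simp [hi] <;> omega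
  · intro v
    have key : (Finset.univ.filter (fun i : Fin (2 * b) => (i : ℕ) < b)).card = b := by
      apply Finset.card_eq_of_bijective (fun j hj => (⟨j, by omega⟩ : Fin (2 * b)))
      · intro i hi
        simp only [Finset.mem_filter, Finset.mem_univ, true_and] at hi
        exact ⟨(i : ℕ), hi, Fin.ext rfl⟩
      · intro j hj
        simp only [Finset.mem_filter, Finset.mem_univ, true_and]
        exact hj
      · intro j k hj hk h
        simpa using congrArg Fin.val h
    have hcompl :
        (Finset.univ.filter (fun i : Fin (2 * b) => ¬ (i : ℕ) < b)).card = b := by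
      have := Finset.card_filter_add_card_filter_not
        (s := (Finset.univ : Finset (Fin (2 * b)))) (p := fun i => (i : ℕ) < b)
      have hcu : (Finset.univ : Finset (Fin (2 * b))).card = 2 * b := by simp
      omega
    by_cases hcv : (C v : ℕ) = 0
    · have : (Finset.univ.filter
          (fun i : Fin (2 * b) => v ∈ Finset.univ.filter
            (fun w => (C w : ℕ) = if (i : ℕ) < b then 0 else 1))) =
          Finset.univ.filter (fun i : Fin (2 * b) => (i : ℕ) < b) := by
        ext i
        simp only [Finset.mem_filter, Finset.mem_univ, true_and]
        by_cases hi : (i : ℕ) < b <;> simp [hi, hcv]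
      rw [this, key]
    · have hcv1 : (C v : ℕ) = 1 := by have := (C v).isLt; omega
      have : (Finset.univ.filter
          (fun i : Fin (2 * b) => v ∈ Finset.univ.filter
            (fun w => (C w : ℕ) = if (i : ℕ) < b then 0 else 1))) =
          Finset.univ.filter (fun i : Fin (2 * b) => ¬ (i : ℕ) < b) := by
        ext i
        simp only [Finset.mem_filter, Finset.mem_univ, true_and]
        by_cases hi : (i : ℕ) < b <;> simp [hi, hcv1]
      rw [this, hcompl]

lemma aux_covers_to_colorable {n : ℕ} (G : SimpleGraph (Fin n)) (b : ℕ) (hb : 0 < b)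
    (S : Fin (2 * b) → Finset (Fin n))
    (hcov : ∀ i, ∀ u v : Fin n, G.Adj u v → u ∈ S i ∨ v ∈ S i)
    (hbud : ∀ v : Fin n, (Finset.univ.filter (fun i => v ∈ S i)).card ≤ b) :
    G.Colorable 2 := by
  have hpos : 0 < 2 * b := by omega
  set i0 : Fin (2 * b) := ⟨0, hpos⟩ with hi0
  have hdisj : ∀ u v : Fin n, G.Adj u v → ¬ (u ∈ S i0 ∧ v ∈ S i0) := by
    rintro u v hadj ⟨hu, hv⟩
    set A := Finset.univ.filter (fun i => u ∈ S i) with hA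
    set B := Finset.univ.filter (fun i => v ∈ S i) with hB
    have hAB : A ∪ B = Finset.univ := by
      ext i
      simp only [hA, hB, Finset.mem_union, Finset.mem_filter, Finset.mem_univ, true_and,
        iff_true]
      exact hcov i u v hadj
    have hcardU : (A ∪ B).card = 2 * b := by rw [hAB]; simp
    have hsum := Finset.card_union_add_card_inter A B
    have h1 := hbud u
    have h2 := hbud v
    have hmem : i0 ∈ A ∩ B := by
      simp [hA, hB, Finset.mem_inter, hu, hv]
    have hpos' : 0 < (A ∩ B).card := Finset.card_pos.mpr ⟨i0, hmem⟩
    rw [← hA] at h1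
    rw [← hB] at h2
    omega
  refine ⟨SimpleGraph.Coloring.mk (fun v => if v ∈ S i0 then 0 else 1) ?_⟩
  intro u v hadj
  by_cases hu : u ∈ S i0 <;> by_cases hv : v ∈ S i0
  · exact absurd ⟨hu, hv⟩ (hdisj u v hadj)
  · simp [hu, hv]
  · simp [hu, hv]
  · exact absurd (hcov i0 u v hadj) (by simp [hu, hv])

/-- For a finite graph `G` with at least one edge, the following are equivalent:
(a) `G` is bipartite (2-colorable); (b) for every `b ≥ 1` there exist `2b` vertex covers
of `G` with every vertex in at most `b` of them; (c) this holds for some `b ≥ 1`. -/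
theorem stmt19 {n : ℕ} (G : SimpleGraph (Fin n)) (hE : ∃ u v, G.Adj u v) :
    (G.Colorable 2 ↔
      ∀ b : ℕ, 0 < b → ∃ S : Fin (2 * b) → Finset (Fin n),
        (∀ i, ∀ u v : Fin n, G.Adj u v → u ∈ S i ∨ v ∈ S i) ∧
        (∀ v : Fin n, (Finset.univ.filter (fun i => v ∈ S i)).card ≤ b)) ∧
    ((∀ b : ℕ, 0 < b → ∃ S : Fin (2 * b) → Finset (Fin n),
        (∀ i, ∀ u v : Fin n, G.Adj u v → u ∈ S i ∨ v ∈ S i) ∧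
        (∀ v : Fin n, (Finset.univ.filter (fun i => v ∈ S i)).card ≤ b)) ↔
      ∃ b : ℕ, 0 < b ∧ ∃ S : Fin (2 * b) → Finset (Fin n),
        (∀ i, ∀ u v : Fin n, G.Adj u v → u ∈ S i ∨ v ∈ S i) ∧
        (∀ v : Fin n, (Finset.univ.filter (fun i => v ∈ S i)).card ≤ b)) := by
  constructor
  · constructor
    · exact fun hcol b hb => aux_colorable_to_covers G hcol b hb
    · intro h
      obtain ⟨S, h1, h2⟩ := h 1 one_pos
      exact aux_covers_to_colorable G 1 one_pos S h1 h2
  · constructor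
    · intro h
      exact ⟨1, one_pos, h 1 one_pos⟩
    · rintro ⟨b, hb, S, h1, h2⟩
      exact fun b' hb' =>
        aux_colorable_to_covers G (aux_covers_to_colorable G b hb S h1 h2) b' hb'
end
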